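/- arXiv:2008.03701 — 7 statements merged into one kernel-verified Lean document; each statement's English description precedes it below -/
import Mathlib

section
/- Let 0 ≤ ε < 1 and let ω ∈ ℝ² with |ω| = 1. Then the integral over the square [-1/2,1/2)² of (1 + ε²|k|² + 2ε ω·k)^{-1} dk is at least 1 + ε²/6 - 7ε⁴/30. In particular if ε² ≤ 5/7, then the integral is at least 1. -/
/-!
Pair `k` with `-k`. Writing `a = ε²|k|²` and `b = 2ε ω·k`, the symmetrised integrand is
`(1 + a) / ((1 + a)² - b²) ≥ 1 / (1 + a) + b² / (1 + a)³ ≥ 1 - a + b² - 3ab²`.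
Integrating this polynomial over the square, odd moments vanish and `|ω| = 1` removes the
dependence on `ω`, leaving exactly `1 + ε²/6 - 7ε⁴/30 = 1 + ε²(5 - 7ε²)/30`.
-/

open MeasureTheory Set

theorem one_add_sq_mul_add_two_mul_pos {ε r s : ℝ} (hs : s ^ 2 ≤ r) (hεr : ε ^ 2 * r < 1) :
    0 < 1 + ε ^ 2 * r + 2 * ε * s := by
  nlinarith [sq_nonneg (1 + ε * s), sq_nonneg (1 - ε ^ 2 * r),
    mul_le_mul_of_nonneg_left hs (sq_nonneg ε)]

theorem sq_inner_le_of_sq_add_sq_eq_one {ω : ℝ × ℝ} (hω : ω.1 ^ 2 + ω.2 ^ 2 = 1) (k : ℝ × ℝ) :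
    (ω.1 * k.1 + ω.2 * k.2) ^ 2 ≤ k.1 ^ 2 + k.2 ^ 2 := by
  nlinarith [sq_nonneg (ω.1 * k.2 - ω.2 * k.1)]

theorem two_mul_one_sub_add_sq_le_inv_add_inv {a b : ℝ} (ha : 0 ≤ a) (hplus : 0 < 1 + a + b)
    (hminus : 0 < 1 + a - b) :
    2 * (1 - a + b ^ 2 - 3 * a * b ^ 2) ≤ (1 + a + b)⁻¹ + (1 + a - b)⁻¹ := by
  have hs : 0 < 1 + a := by linarith
  have hprod : 0 < (1 + a) ^ 2 - b ^ 2 := by nlinarith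
  have hinv : 1 - a ≤ 1 / (1 + a) := by
    rw [le_div_iff₀ hs]; nlinarith
  have hinv_cube : 1 - 3 * a ≤ 1 / (1 + a) ^ 3 := by
    rw [le_div_iff₀ (by positivity)]; nlinarith [pow_nonneg ha 3, pow_nonneg ha 4]
  have hgeom : 1 / (1 + a) + b ^ 2 / (1 + a) ^ 3 ≤ (1 + a) / ((1 + a) ^ 2 - b ^ 2) := by
    rw [div_add_div _ _ hs.ne' (by positivity), div_le_div_iff₀ (by positivity) hprod]
    nlinarith [pow_nonneg (sq_nonneg b) 2, pow_pos hs 3]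
  calc 2 * (1 - a + b ^ 2 - 3 * a * b ^ 2) = 2 * ((1 - a) + b ^ 2 * (1 - 3 * a)) := by ring
    _ ≤ 2 * (1 / (1 + a) + b ^ 2 / (1 + a) ^ 3) := by
      rw [← mul_one_div (b ^ 2)]; gcongr
    _ ≤ 2 * ((1 + a) / ((1 + a) ^ 2 - b ^ 2)) := by gcongr
    _ = (1 + a + b)⁻¹ + (1 + a - b)⁻¹ := by field_simp; ring

section Symmetrization

variable {G : Type*} [AddGroup G] [MeasurableSpace G] [MeasurableNeg G] {μ : Measure G}
  [μ.IsNegInvariant] {s : Set G}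

theorem setIntegral_comp_neg_of_neg_eq {E : Type*} [NormedAddCommGroup E] [NormedSpace ℝ E]
    (hs : -s = s) (f : G → E) :
    ∫ x in s, f (-x) ∂μ = ∫ x in s, f x ∂μ := by
  have := (Measure.measurePreserving_neg μ).setIntegral_preimage_emb
    (MeasurableEquiv.neg G).measurableEmbedding f s
  rwa [neg_preimage, hs] at this

theorem setIntegral_le_of_two_mul_le_add_comp_neg (hs : -s = s) (hs_meas : MeasurableSet s)
    {f g : G → ℝ} (hf : IntegrableOn f s μ) (hg : IntegrableOn g s μ)
    (hgf : ∀ x ∈ s, 2 * g x ≤ f x + f (-x)) :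
    ∫ x in s, g x ∂μ ≤ ∫ x in s, f x ∂μ := by
  have hf_neg : IntegrableOn (fun x => f (-x)) s μ := hs ▸ hf.comp_neg
  calc ∫ x in s, g x ∂μ ≤ ∫ x in s, (f x + f (-x)) / 2 ∂μ :=
        setIntegral_mono_on hg ((hf.add hf_neg).div_const 2) hs_meas fun x hx => by
          linarith [hgf x hx]
    _ = ∫ x in s, f x ∂μ := by
        rw [integral_div, integral_add hf hf_neg, setIntegral_comp_neg_of_neg_eq hs f]
        ring

end Symmetrization

theorem integral_Icc_quartic (c₀ c₁ c₂ c₃ c₄ : ℝ) :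
    ∫ y in Icc (-(1 : ℝ) / 2) (1 / 2), (c₀ + c₁ * y + c₂ * y ^ 2 + c₃ * y ^ 3 + c₄ * y ^ 4) =
      c₀ + c₂ / 12 + c₄ / 80 := by
  rw [integral_Icc_eq_integral_Ioc, ← intervalIntegral.integral_of_le (by norm_num)]
  simp (disch := exact Continuous.intervalIntegrable (by fun_prop) _ _) only
    [intervalIntegral.integral_add, intervalIntegral.integral_const_mul, integral_pow,
    intervalIntegral.integral_const, intervalIntegral.integral_const_mul c₁ (fun y => y),
    integral_id]
  norm_num
  ring

theorem integral_square_even_lower_bound (ε : ℝ) (ω : ℝ × ℝ) (hω : ω.1 ^ 2 + ω.2 ^ 2 = 1) :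
    ∫ k in Icc ((-(1 : ℝ) / 2, -(1 : ℝ) / 2)) (((1 : ℝ) / 2, (1 : ℝ) / 2)),
      (1 - ε ^ 2 * (k.1 ^ 2 + k.2 ^ 2) + (2 * ε * (ω.1 * k.1 + ω.2 * k.2)) ^ 2
        - 3 * (ε ^ 2 * (k.1 ^ 2 + k.2 ^ 2)) * (2 * ε * (ω.1 * k.1 + ω.2 * k.2)) ^ 2) =
      1 + ε ^ 2 / 6 - 7 * ε ^ 4 / 30 := by
  have hint : ∀ x : ℝ, ∫ y in Icc (-(1 : ℝ) / 2) (1 / 2),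
      (1 - ε ^ 2 * (x ^ 2 + y ^ 2) + (2 * ε * (ω.1 * x + ω.2 * y)) ^ 2
        - 3 * (ε ^ 2 * (x ^ 2 + y ^ 2)) * (2 * ε * (ω.1 * x + ω.2 * y)) ^ 2) =
      (1 - ε ^ 2 / 12 + ε ^ 2 * ω.2 ^ 2 / 3 - 3 * ε ^ 4 * ω.2 ^ 2 / 20)
        + (4 * ω.1 ^ 2 - 1 - ε ^ 2 * (ω.1 ^ 2 + ω.2 ^ 2)) * ε ^ 2 * x ^ 2
        + (-12 * ε ^ 4 * ω.1 ^ 2) * x ^ 4 := by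
    intro x
    have := integral_Icc_quartic
      (1 + (4 * ω.1 ^ 2 - 1) * ε ^ 2 * x ^ 2 - 12 * ε ^ 4 * ω.1 ^ 2 * x ^ 4)
      (8 * ε ^ 2 * ω.1 * ω.2 * x - 24 * ε ^ 4 * ω.1 * ω.2 * x ^ 3)
      ((4 * ω.2 ^ 2 - 1) * ε ^ 2 - 12 * ε ^ 4 * (ω.1 ^ 2 + ω.2 ^ 2) * x ^ 2)
      (-24 * ε ^ 4 * ω.1 * ω.2 * x) (-12 * ε ^ 4 * ω.2 ^ 2)
    convert this using 1
    · congr 1; ext y; ring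
    · ring
  rw [← Icc_prod_Icc, Measure.volume_eq_prod, setIntegral_prod _ ((Continuous.continuousOn
    (by fun_prop)).integrableOn_compact (isCompact_Icc.prod isCompact_Icc))]
  simp only [hint, hω, mul_one]
  convert integral_Icc_quartic (1 - ε ^ 2 / 12 + ε ^ 2 * ω.2 ^ 2 / 3 - 3 * ε ^ 4 * ω.2 ^ 2 / 20) 0
    ((4 * ω.1 ^ 2 - 1 - ε ^ 2) * ε ^ 2) 0 (-12 * ε ^ 4 * ω.1 ^ 2) using 1
  · congr 1; ext x; ring
  · linear_combination (3 * ε ^ 4 / 20 - ε ^ 2 / 3) * hω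

/-- lower bound for the integral of `(1 + ε²|k|² + 2ε ω·k)⁻¹`
over the unit square, for a unit vector `ω ∈ ℝ²` and `0 ≤ ε < 1`. -/
theorem stmt0 (ε : ℝ) (hε0 : 0 ≤ ε) (hε1 : ε < 1) (ω : ℝ × ℝ)
    (hω : ω.1 ^ 2 + ω.2 ^ 2 = 1) :
    (1 + ε ^ 2 / 6 - 7 * ε ^ 4 / 30 ≤
      ∫ k in Set.Icc ((-(1 : ℝ) / 2, -(1 : ℝ) / 2)) (((1 : ℝ) / 2, (1 : ℝ) / 2)),
        (1 + ε ^ 2 * (k.1 ^ 2 + k.2 ^ 2) + 2 * ε * (ω.1 * k.1 + ω.2 * k.2))⁻¹) ∧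
    (ε ^ 2 ≤ 5 / 7 →
      1 ≤ ∫ k in Set.Icc ((-(1 : ℝ) / 2, -(1 : ℝ) / 2)) (((1 : ℝ) / 2, (1 : ℝ) / 2)),
        (1 + ε ^ 2 * (k.1 ^ 2 + k.2 ^ 2) + 2 * ε * (ω.1 * k.1 + ω.2 * k.2))⁻¹) := by
  set S : Set (ℝ × ℝ) := Icc ((-(1 : ℝ) / 2, -(1 : ℝ) / 2)) (((1 : ℝ) / 2, (1 : ℝ) / 2))
  set a : ℝ × ℝ → ℝ := fun k => ε ^ 2 * (k.1 ^ 2 + k.2 ^ 2)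
  set b : ℝ × ℝ → ℝ := fun k => 2 * ε * (ω.1 * k.1 + ω.2 * k.2)
  have hS : -S = S := by simp only [S, neg_Icc, Prod.neg_mk]; norm_num
  have hpos : ∀ k ∈ S, 0 < 1 + a k + b k := by
    rintro k ⟨⟨h₁, h₂⟩, h₃, h₄⟩
    simp only at h₁ h₂ h₃ h₄
    have hk : k.1 ^ 2 + k.2 ^ 2 ≤ 1 := by nlinarith
    refine one_add_sq_mul_add_two_mul_pos (sq_inner_le_of_sq_add_sq_eq_one hω k) ?_
    nlinarith [mul_le_mul_of_nonneg_left hk (sq_nonneg ε)]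
  have hab_neg : ∀ k, 1 + a (-k) + b (-k) = 1 + a k - b k := fun k => by
    simp only [a, b, Prod.fst_neg, Prod.snd_neg]; ring
  have key : 1 + ε ^ 2 / 6 - 7 * ε ^ 4 / 30 ≤ ∫ k in S, (1 + a k + b k)⁻¹ := by
    rw [← integral_square_even_lower_bound ε ω hω]
    refine setIntegral_le_of_two_mul_le_add_comp_neg hS measurableSet_Icc
      ((ContinuousOn.inv₀ (by fun_prop) fun k hk => (hpos k hk).ne').integrableOn_compact
        isCompact_Icc)
      ((Continuous.continuousOn (by fun_prop)).integrableOn_compact isCompact_Icc) fun k hk => ?_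
    rw [hab_neg]
    exact two_mul_one_sub_add_sq_le_inv_add_inv (by positivity) (hpos k hk)
      (hab_neg k ▸ hpos (-k) (hS.symm ▸ neg_mem_neg.2 hk))
  exact ⟨key, fun hε => le_trans (by nlinarith) key⟩
end

section
/- For any real numbers r₁, r₂ with 1/√2 < r₁ < r₂, the sum of 1/|n|² over lattice points n ∈ ℤ² with r₁ ≤ |n| ≤ r₂ is at most 2π(ln(r₂ + 1/√2) - ln(r₁ - 1/√2)). -/
/-!
Each lattice point `n` with `r₁ ≤ |n| ≤ r₂` is the centre of an open unit square (a sup-norm ball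
of radius `1/2`) on which the average of `1/|x|²` is at least `1/|n|²`: averaging over the four
images of a point of the square under quarter turns about `n` already gives this, because
`|n + v|², |n + iv|², |n - v|², |n - iv|²` are `N + V ± 2p`, `N + V ± 2q` with `p² + q² = NV`
(`N = |n|²`, `V = |v|²`). These squares are disjoint and lie in the annulus
`r₁ - 1/√2 ≤ |x| ≤ r₂ + 1/√2`, over which `∫ 1/|x|² = 2π (log (r₂ + 1/√2) - log (r₁ - 1/√2))`
in polar coordinates.
-/

open Real MeasureTheory Set Metric Function

theorem four_div_le_sum_one_div {N V p q : ℝ} (hV : 0 ≤ V) (hVN : V < N)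
    (hpq : p ^ 2 + q ^ 2 = N * V) :
    4 / N ≤ 1 / (N + V + 2 * p) + 1 / (N + V - 2 * p) + 1 / (N + V + 2 * q) +
      1 / (N + V - 2 * q) := by
  set S := N + V
  have pair : ∀ t, t ^ 2 ≤ N * V →
      1 / (S + 2 * t) + 1 / (S - 2 * t) = 2 * S / (S ^ 2 - 4 * t ^ 2) := by
    intro t ht
    have h1 : 0 < S + 2 * t := by nlinarith
    have h2 : 0 < S - 2 * t := by nlinarith
    rw [div_add_div _ _ h1.ne' h2.ne', div_eq_div_iff (by positivity) (by nlinarith)]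
    ring
  have hp : 0 < S ^ 2 - 4 * p ^ 2 := by nlinarith [sq_nonneg q]
  have hq : 0 < S ^ 2 - 4 * q ^ 2 := by nlinarith [sq_nonneg p]
  rw [add_assoc _ (1 / (S + 2 * q)), pair p (by nlinarith [sq_nonneg q]),
    pair q (by nlinarith [sq_nonneg p]), div_add_div _ _ hp.ne' hq.ne',
    div_le_div_iff₀ (by linarith) (mul_pos hp hq)]
  nlinarith [sq_nonneg (p ^ 2 - q ^ 2), mul_nonneg hV (sub_nonneg.2 hVN.le)]

def euclNormSq (x : ℝ × ℝ) : ℝ := x.1 ^ 2 + x.2 ^ 2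

noncomputable def euclNorm (x : ℝ × ℝ) : ℝ := √(euclNormSq x)

lemma euclNormSq_nonneg (x : ℝ × ℝ) : 0 ≤ euclNormSq x := by
  unfold euclNormSq; positivity

lemma euclNormSq_eq_zero {x : ℝ × ℝ} : euclNormSq x = 0 ↔ x = 0 := by
  simp [euclNormSq, add_eq_zero_iff_of_nonneg, sq_nonneg, Prod.ext_iff]

lemma euclNormSq_le_two_mul_norm_sq (v : ℝ × ℝ) : euclNormSq v ≤ 2 * ‖v‖ ^ 2 := by
  have h1 := pow_le_pow_left₀ (abs_nonneg _) (norm_fst_le v) 2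
  have h2 := pow_le_pow_left₀ (abs_nonneg _) (norm_snd_le v) 2
  rw [Real.norm_eq_abs, sq_abs] at h1 h2
  unfold euclNormSq
  linarith

lemma norm_le_euclNorm (x : ℝ × ℝ) : ‖x‖ ≤ euclNorm x := by
  refine max_le (Real.abs_le_sqrt ?_) (Real.abs_le_sqrt ?_) <;> unfold euclNormSq <;>
    nlinarith [sq_nonneg x.1, sq_nonneg x.2]

lemma euclNorm_eq_norm_toLp (x : ℝ × ℝ) : euclNorm x = ‖WithLp.toLp 2 x‖ := by
  simp [euclNorm, euclNormSq, WithLp.prod_norm_eq_of_L2]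

lemma abs_euclNorm_sub_euclNorm_le (x y : ℝ × ℝ) :
    |euclNorm x - euclNorm y| ≤ euclNorm (x - y) := by
  simp only [euclNorm_eq_norm_toLp, WithLp.toLp_sub]
  exact abs_norm_sub_norm_le _ _

lemma euclNorm_lt_of_norm_lt {v : ℝ × ℝ} {r : ℝ} (h : ‖v‖ < r) : euclNorm v < √2 * r := by
  have hr : 0 ≤ r := (norm_nonneg v).trans h.le
  rw [euclNorm, ← Real.sqrt_sq hr, ← Real.sqrt_mul zero_le_two]
  refine Real.sqrt_lt_sqrt (euclNormSq_nonneg v) ((euclNormSq_le_two_mul_norm_sq v).trans_lt ?_)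
  gcongr

lemma continuous_euclNorm : Continuous euclNorm := by
  unfold euclNorm euclNormSq; fun_prop

def quarterTurn : (ℝ × ℝ) ≃ᵐ (ℝ × ℝ) :=
  MeasurableEquiv.prodComm.trans ((MeasurableEquiv.neg ℝ).prodCongr (MeasurableEquiv.refl ℝ))

@[simp] lemma quarterTurn_apply (x : ℝ × ℝ) : quarterTurn x = (-x.2, x.1) := rfl

lemma measurePreserving_quarterTurn : MeasurePreserving quarterTurn := by
  rw [Measure.volume_eq_prod]
  exact ((Measure.measurePreserving_neg volume).prod (MeasurePreserving.id volume)).comp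
    Measure.measurePreserving_swap

lemma quarterTurn_preimage_ball (r : ℝ) : quarterTurn ⁻¹' ball 0 r = ball 0 r := by
  ext v
  simp [Prod.norm_def, max_comm]

lemma setIntegral_ball_comp_quarterTurn (g : ℝ × ℝ → ℝ) (r : ℝ) :
    ∫ v in ball 0 r, g (quarterTurn v) = ∫ v in ball 0 r, g v := by
  have h := measurePreserving_quarterTurn.setIntegral_preimage_emb
    quarterTurn.measurableEmbedding g (ball 0 r)
  rwa [quarterTurn_preimage_ball] at h

lemma setIntegral_ball_comp_iterate_quarterTurn (g : ℝ × ℝ → ℝ) (r : ℝ) (k : ℕ) :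
    ∫ v in ball 0 r, g (quarterTurn^[k] v) = ∫ v in ball 0 r, g v := by
  induction k with
  | zero => rfl
  | succ k ih =>
    simp only [Function.iterate_succ_apply]
    rw [← ih]
    exact setIntegral_ball_comp_quarterTurn (fun w => g (quarterTurn^[k] w)) r

lemma integrableOn_ball_comp_iterate_quarterTurn {g : ℝ × ℝ → ℝ} {r : ℝ}
    (hg : IntegrableOn g (ball 0 r)) (k : ℕ) :
    IntegrableOn (fun v => g (quarterTurn^[k] v)) (ball 0 r) := by
  induction k with
  | zero => exact hg
  | succ k ih =>
    simp only [Function.iterate_succ_apply]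
    rw [← quarterTurn_preimage_ball r]
    exact (measurePreserving_quarterTurn.integrableOn_comp_preimage
      quarterTurn.measurableEmbedding (f := fun v => g (quarterTurn^[k] v))).2 ih

lemma four_div_le_sum_iterate_quarterTurn (n : ℝ × ℝ) {v : ℝ × ℝ}
    (hv : euclNormSq v < euclNormSq n) :
    4 / euclNormSq n ≤ ∑ k ∈ Finset.range 4, 1 / euclNormSq (n + quarterTurn^[k] v) := by
  have := four_div_le_sum_one_div (euclNormSq_nonneg v) hv
    (p := n.1 * v.1 + n.2 * v.2) (q := n.2 * v.1 - n.1 * v.2) (by unfold euclNormSq; ring)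
  simp only [Finset.sum_range_succ, Finset.sum_range_zero, Function.iterate_succ_apply',
    Function.iterate_zero_apply, quarterTurn_apply, euclNormSq, Prod.fst_add,
    Prod.snd_add] at this ⊢
  convert this using 1
  ring_nf

lemma setIntegral_ball_eq_setIntegral_ball_zero (g : ℝ × ℝ → ℝ) (n : ℝ × ℝ) (r : ℝ) :
    ∫ x in ball n r, g x = ∫ v in ball 0 r, g (n + v) := by
  rw [← (measurePreserving_add_left volume n).setIntegral_preimage_emb
    (measurableEmbedding_addLeft n) g (ball n r)]
  simp [preimage_add_ball]

theorem volume_real_ball_div_euclNormSq_le_setIntegral (n : ℝ × ℝ) {r : ℝ}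
    (hr : 2 * r ^ 2 < euclNormSq n) :
    volume.real (ball n r) / euclNormSq n ≤ ∫ x in ball n r, 1 / euclNormSq x := by
  set g : ℝ × ℝ → ℝ := fun v => 1 / euclNormSq (n + v)
  have hsmall : ∀ v ∈ closedBall (0 : ℝ × ℝ) r, euclNormSq v < euclNormSq n := fun v hv =>
    (euclNormSq_le_two_mul_norm_sq v).trans_lt <| by
      have := mem_closedBall_zero_iff.1 hv
      nlinarith [norm_nonneg v]
  have hg : IntegrableOn g (ball 0 r) := by
    refine ContinuousOn.integrableOn_compact (isCompact_closedBall 0 r) ?_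
      |>.mono_set ball_subset_closedBall
    refine continuousOn_const.div (by unfold euclNormSq; fun_prop) fun v hv h0 => ?_
    have hvn : v = -n := eq_neg_of_add_eq_zero_right (euclNormSq_eq_zero.1 h0)
    exact (hsmall v hv).ne (by rw [hvn]; simp [euclNormSq])
  have hgk := integrableOn_ball_comp_iterate_quarterTurn hg
  calc volume.real (ball n r) / euclNormSq n
      = (∫ _ in ball (0 : ℝ × ℝ) r, 4 / euclNormSq n) / 4 := by
        rw [setIntegral_const, smul_eq_mul, measureReal_def, measureReal_def,
          Measure.addHaar_ball_center]
        ring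
    _ ≤ (∫ v in ball 0 r, ∑ k ∈ Finset.range 4, g (quarterTurn^[k] v)) / 4 := by
        refine div_le_div_of_nonneg_right ?_ zero_le_four
        exact setIntegral_mono_on (integrableOn_const measure_ball_lt_top.ne)
          (integrable_finsetSum _ fun k _ => hgk k) measurableSet_ball fun v hv =>
            four_div_le_sum_iterate_quarterTurn n (hsmall v (ball_subset_closedBall hv))
    _ = ∫ v in ball 0 r, g v := by
        rw [integral_finsetSum _ fun k _ => hgk k]
        simp only [setIntegral_ball_comp_iterate_quarterTurn, Finset.sum_const,
          Finset.card_range]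
        ring
    _ = ∫ x in ball n r, 1 / euclNormSq x :=
        (setIntegral_ball_eq_setIntegral_ball_zero (fun x => 1 / euclNormSq x) n r).symm

def annulus (a b : ℝ) : Set (ℝ × ℝ) := {x | a ≤ euclNorm x ∧ euclNorm x ≤ b}

lemma isCompact_annulus (a b : ℝ) : IsCompact (annulus a b) := by
  refine isCompact_of_isClosed_isBounded (isClosed_Icc.preimage continuous_euclNorm)
    ((isBounded_closedBall (x := 0) (r := b)).subset fun x hx => ?_)
  exact mem_closedBall_zero_iff.2 ((norm_le_euclNorm x).trans hx.2)

lemma integrableOn_one_div_euclNormSq_annulus {a : ℝ} (ha : 0 < a) (b : ℝ) :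
    IntegrableOn (fun x => 1 / euclNormSq x) (annulus a b) := by
  refine ContinuousOn.integrableOn_compact (isCompact_annulus a b) ?_
  refine continuousOn_const.div (by unfold euclNormSq; fun_prop) fun x hx h0 => ?_
  have : euclNorm x = 0 := by rw [euclNorm, h0, sqrt_zero]
  linarith [hx.1]

lemma euclNormSq_polarCoord_symm (p : ℝ × ℝ) : euclNormSq (polarCoord.symm p) = p.1 ^ 2 := by
  simp only [euclNormSq, polarCoord_symm_apply]
  linear_combination p.1 ^ 2 * cos_sq_add_sin_sq p.2

lemma integral_indicator_annulus {a b : ℝ} (ha : 0 < a) (hab : a ≤ b) :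
    ∫ x, (annulus a b).indicator (fun x => 1 / euclNormSq x) x = 2 * π * (log b - log a) := by
  have hpolar : ∀ p ∈ polarCoord.target,
      p.1 • (annulus a b).indicator (fun x => 1 / euclNormSq x) (polarCoord.symm p) =
        (Icc a b).indicator (fun ρ => ρ⁻¹) p.1 := by
    rintro ⟨ρ, θ⟩ ⟨hρ, -⟩
    have hρ : 0 < ρ := hρ
    have hmem_iff : polarCoord.symm (ρ, θ) ∈ annulus a b ↔ ρ ∈ Icc a b := by
      change a ≤ √_ ∧ √_ ≤ b ↔ _
      rw [euclNormSq_polarCoord_symm, sqrt_sq hρ.le]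
      rfl
    by_cases hmem : ρ ∈ Icc a b
    · rw [indicator_of_mem hmem, indicator_of_mem (hmem_iff.2 hmem), euclNormSq_polarCoord_symm,
        smul_eq_mul]
      field_simp
    · rw [indicator_of_notMem hmem, indicator_of_notMem (mt hmem_iff.1 hmem), smul_zero]
  have hradial : ∫ ρ in Ioi 0, (Icc a b).indicator (fun ρ => ρ⁻¹) ρ = log b - log a := by
    have hsub : Ioi (0 : ℝ) ∩ Icc a b = Icc a b :=
      inter_eq_self_of_subset_right fun x hx => ha.trans_le hx.1
    rw [setIntegral_indicator measurableSet_Icc, hsub, integral_Icc_eq_integral_Ioc,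
      ← intervalIntegral.integral_of_le hab,
      integral_inv (notMem_uIcc_of_lt ha (ha.trans_le hab)), log_div (by linarith) (by linarith)]
  have hprod := setIntegral_prod_mul (μ := volume) (ν := volume)
    (fun ρ => (Icc a b).indicator (fun ρ => ρ⁻¹) ρ) (fun _ => (1 : ℝ)) (Ioi 0) (Ioo (-π) π)
  simp only [mul_one, setIntegral_const, smul_eq_mul] at hprod
  rw [← integral_comp_polarCoord_symm,
    setIntegral_congr_fun polarCoord.open_target.measurableSet hpolar, polarCoord_target,
    Measure.volume_eq_prod, hprod, hradial, volume_real_Ioo_of_le (by linarith [pi_pos])]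
  ring

lemma indicator_one_div_euclNormSq_nonneg (s : Set (ℝ × ℝ)) :
    0 ≤ s.indicator fun x => 1 / euclNormSq x :=
  indicator_nonneg fun x _ => one_div_nonneg.2 (euclNormSq_nonneg x)

lemma ball_subset_annulus {n : ℝ × ℝ} {a b : ℝ} (hn : n ∈ annulus a b) (r : ℝ) :
    ball n r ⊆ annulus (a - √2 * r) (b + √2 * r) := by
  intro x hx
  have hclose := (abs_euclNorm_sub_euclNorm_le x n).trans_lt
    (euclNorm_lt_of_norm_lt (mem_ball_iff_norm.1 hx))
  rw [abs_lt] at hclose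
  exact ⟨by linarith [hn.1], by linarith [hn.2]⟩

lemma volume_real_ball_half (n : ℝ × ℝ) : volume.real (ball n (1 / 2)) = 1 := by
  rw [measureReal_def, ← ball_prod_same, Measure.volume_eq_prod, Measure.prod_prod,
    Real.volume_ball, Real.volume_ball]
  norm_num

lemma indicator_annulus_le_setIntegral_ball_half {a : ℝ} (b : ℝ) (ha : 1 / √2 < a)
    (n : ℝ × ℝ) :
    (annulus a b).indicator (fun x => 1 / euclNormSq x) n ≤
      ∫ x in ball n (1 / 2),
        (annulus (a - 1 / √2) (b + 1 / √2)).indicator (fun x => 1 / euclNormSq x) x := by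
  by_cases hn : n ∈ annulus a b
  · have hc : √2 * (1 / 2) = 1 / √2 := by
      field_simp
      rw [Real.sq_sqrt zero_le_two]
    have hsub := ball_subset_annulus hn (1 / 2)
    rw [hc] at hsub
    have hr : 2 * (1 / 2 : ℝ) ^ 2 < euclNormSq n := by
      have := ha.trans_le hn.1
      rw [euclNorm, Real.lt_sqrt (by positivity), div_pow, Real.sq_sqrt zero_le_two] at this
      linarith
    rw [indicator_of_mem hn, setIntegral_congr_fun measurableSet_ball
      fun x hx => indicator_of_mem (hsub hx) _]
    have := volume_real_ball_div_euclNormSq_le_setIntegral n hr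
    rw [volume_real_ball_half] at this
    exact this
  · rw [indicator_of_notMem hn]
    exact setIntegral_nonneg measurableSet_ball fun x _ =>
      indicator_one_div_euclNormSq_nonneg _ x

lemma pairwise_disjoint_ball_half_intCast :
    Pairwise (Disjoint on fun n : ℤ × ℤ => ball ((n.1 : ℝ), (n.2 : ℝ)) (1 / 2)) := by
  intro m n hmn
  refine ball_disjoint_ball ((add_halves 1).trans_le ?_)
  rw [Prod.dist_eq, Int.dist_cast_real, Int.dist_cast_real, le_max_iff]
  by_cases h : m.1 = n.1
  · exact Or.inr (Int.pairwise_one_le_dist fun h' => hmn (Prod.ext h h'))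
  · exact Or.inl (Int.pairwise_one_le_dist h)

theorem sum_setIntegral_le_integral {ι X : Type*} [MeasurableSpace X] {μ : Measure X}
    {f : X → ℝ} (hf : Integrable f μ) (hf0 : 0 ≤ f) {s : ι → Set X}
    (hs : ∀ i, MeasurableSet (s i)) (hd : Pairwise (Disjoint on s)) (u : Finset ι) :
    ∑ i ∈ u, ∫ x in s i, f x ∂μ ≤ ∫ x, f x ∂μ := by
  rw [← integral_biUnion_finset u (fun i _ => hs i) (hd.set_pairwise _)
    fun i _ => hf.integrableOn]
  exact setIntegral_le_integral hf (Filter.Eventually.of_forall hf0)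

/-- lattice sum of `1/|n|²` over an annulus `r₁ ≤ |n| ≤ r₂`. -/
theorem stmt1 (r₁ r₂ : ℝ) (h1 : 1 / Real.sqrt 2 < r₁) (h12 : r₁ < r₂) :
    (∑' n : ℤ × ℤ,
        if r₁ ≤ Real.sqrt ((n.1 : ℝ) ^ 2 + (n.2 : ℝ) ^ 2) ∧
            Real.sqrt ((n.1 : ℝ) ^ 2 + (n.2 : ℝ) ^ 2) ≤ r₂ then
          1 / ((n.1 : ℝ) ^ 2 + (n.2 : ℝ) ^ 2)
        else 0) ≤
      2 * π * (Real.log (r₂ + 1 / Real.sqrt 2) - Real.log (r₁ - 1 / Real.sqrt 2)) := by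
  have hc : 0 < 1 / √2 := by positivity
  set F := (annulus (r₁ - 1 / √2) (r₂ + 1 / √2)).indicator fun x => 1 / euclNormSq x
  have hF : Integrable F := by
    rw [integrable_indicator_iff (isCompact_annulus _ _).isClosed.measurableSet]
    exact integrableOn_one_div_euclNormSq_annulus (by linarith) _
  have hterm : ∀ n : ℤ × ℤ, (if r₁ ≤ √((n.1 : ℝ) ^ 2 + (n.2 : ℝ) ^ 2) ∧
      √((n.1 : ℝ) ^ 2 + (n.2 : ℝ) ^ 2) ≤ r₂ then 1 / ((n.1 : ℝ) ^ 2 + (n.2 : ℝ) ^ 2) else 0) =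
      (annulus r₁ r₂).indicator (fun x => 1 / euclNormSq x) ((n.1 : ℝ), (n.2 : ℝ)) := by
    intro n
    simp [indicator_apply, annulus, euclNorm, euclNormSq]
  simp only [hterm]
  refine Real.tsum_le_of_sum_le (fun n => indicator_one_div_euclNormSq_nonneg _ _) fun u => ?_
  calc ∑ n ∈ u, (annulus r₁ r₂).indicator (fun x => 1 / euclNormSq x) ((n.1 : ℝ), (n.2 : ℝ))
      ≤ ∑ n ∈ u, ∫ x in ball ((n.1 : ℝ), (n.2 : ℝ)) (1 / 2), F x :=
        Finset.sum_le_sum fun n _ => indicator_annulus_le_setIntegral_ball_half r₂ h1 _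
    _ ≤ ∫ x, F x := sum_setIntegral_le_integral hF (indicator_one_div_euclNormSq_nonneg _)
        (fun _ => measurableSet_ball) pairwise_disjoint_ball_half_intCast u
    _ = _ := integral_indicator_annulus (by linarith) (by linarith)
end

section
/- For any r ≥ 2, the sum of |k|^{-2} over nonzero lattice points k ∈ ℤ² with 0 < |k| ≤ r is at most 4.4 + 2π ln(r + 1/√2). -/
/-!
Group the lattice points into the sup-norm shells `box n = {k | max |k.1| |k.2| = n}`; the disk of
radius `r` lies in the shells with `n ≤ ⌊r⌋`. By symmetry, shell `n` contributes
`4 ∑_{j<n} (f j + f (j + 1))` with `f t = 1 / (n² + t²)`, and each trapezoid `f j + f (j + 1)` is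
at most `(2 / n) (arctan ((j + 1) / n) - arctan (j / n)) + 2 / (3 n⁴)`. The arctangents telescope
to `π / 4`, so shell `n` contributes at most `2π / n + 8 / (3 n³)`. Starting from the exact value
`9.1` of the shells `n ≤ 2`, the bound `1 / n ≤ log (n + 1/2) - log (n - 1/2)` sums the main terms,
and the potential `4 / (3 n²)` absorbs the cubic errors; this gives the constant
`283 / 30 = 9.1 + 4 / (3 · 2²)`.
-/

open Real Finset

namespace Real

lemma sub_pow_three_div_three_le_arctan {x : ℝ} (hx : 0 ≤ x) : x - x ^ 3 / 3 ≤ arctan x := by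
  have hg (y : ℝ) : HasDerivAt (fun t ↦ arctan t - t + t ^ 3 / 3) (y ^ 4 / (1 + y ^ 2)) y := by
    have h : HasDerivAt (fun t ↦ arctan t - t + t ^ 3 / 3)
        (1 / (1 + y ^ 2) - 1 + (3 : ℕ) * y ^ (3 - 1) * 1 / 3) y :=
      ((hasDerivAt_arctan y).sub (hasDerivAt_id y)).add (((hasDerivAt_id y).pow 3).div_const 3)
    convert h using 1
    have : 1 + y ^ 2 ≠ 0 := by positivity
    field_simp
    ring
  have hmono : Monotone fun t ↦ arctan t - t + t ^ 3 / 3 :=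
    monotone_of_deriv_nonneg (fun y ↦ (hg y).differentiableAt)
      fun y ↦ (hg y).deriv ▸ by positivity
  have := hmono hx
  simp only [arctan_zero] at this
  linarith

lemma arctan_sub_arctan {x y : ℝ} (h : -1 < x * y) :
    arctan x - arctan y = arctan ((x - y) / (1 + x * y)) := by
  rw [sub_eq_add_neg, ← arctan_neg, arctan_add (by linarith)]
  congr 2; ring

lemma two_div_le_log_one_add_inv {a : ℝ} (ha : 0 < a) : 2 / (2 * a + 1) ≤ log (1 + a⁻¹) := by
  have := le_hasSum (hasSum_log_one_add_inv ha) 0 fun _ _ ↦ by positivity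
  simpa [div_eq_mul_inv] using this

lemma inv_le_log_add_half_sub_log_sub_half {x : ℝ} (hx : 1 / 2 < x) :
    x⁻¹ ≤ log (x + 1 / 2) - log (x - 1 / 2) := by
  have h := two_div_le_log_one_add_inv (sub_pos.2 hx)
  have hx' : x - 1 / 2 ≠ 0 := by linarith
  rw [← log_div (by linarith) hx']
  have h2 : 2 * (x - 1 / 2) + 1 = 2 * x := by ring
  have h3 : 1 + (x - 1 / 2)⁻¹ = (x + 1 / 2) / (x - 1 / 2) := by
    rw [eq_div_iff hx', add_mul, inv_mul_cancel₀ hx']; ring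
  rw [h2, h3, div_mul_cancel_left₀ two_ne_zero, one_div] at h
  simpa only [one_div] using h

end Real

lemma inv_add_inv_le_arctan_sub_arctan {n j : ℝ} (hn : 0 < n) (hj : 0 ≤ j)
    (hjn : j * (j + 1) ≤ n ^ 2) :
    (n ^ 2 + j ^ 2)⁻¹ + (n ^ 2 + (j + 1) ^ 2)⁻¹ ≤
      2 / n * (arctan ((j + 1) / n) - arctan (j / n)) + 2 / (3 * n ^ 4) := by
  set M := n ^ 2 + j * (j + 1)
  have hnM : n ^ 2 ≤ M := by nlinarith
  have hM0 : 0 < M := by positivity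
  have hdiff : arctan ((j + 1) / n) - arctan (j / n) = arctan (n / M) := by
    rw [arctan_sub_arctan (neg_one_lt_zero.trans_le (by positivity))]
    congr 1
    field_simp
    ring
  -- after clearing denominators this is `2 j (j + 1) ≤ M`, i.e. `hjn`
  have htrap : (n ^ 2 + j ^ 2)⁻¹ + (n ^ 2 + (j + 1) ^ 2)⁻¹ ≤ 2 / M := by
    rw [inv_add_inv (by positivity) (by positivity), div_le_div_iff₀ (by positivity) hM0]
    nlinarith
  have herr : 2 * n ^ 2 / (3 * M ^ 3) ≤ 2 / (3 * n ^ 4) := by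
    rw [div_le_div_iff₀ (by positivity) (by positivity)]
    nlinarith [pow_le_pow_left₀ (by positivity) hnM 3]
  calc (n ^ 2 + j ^ 2)⁻¹ + (n ^ 2 + (j + 1) ^ 2)⁻¹ ≤ 2 / M := htrap
    _ = 2 / n * (n / M - (n / M) ^ 3 / 3) + 2 * n ^ 2 / (3 * M ^ 3) := by
      field_simp
      ring
    _ ≤ 2 / n * arctan (n / M) + 2 / (3 * n ^ 4) := by
      gcongr
      exact sub_pow_three_div_three_le_arctan (by positivity)
    _ = _ := by rw [hdiff]

lemma sum_Ioc_neg_eq_sum_range {M : Type*} [AddCommMonoid M] (f : ℤ → M)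
    (hf : ∀ j, f (-j) = f j) (n : ℕ) :
    ∑ j ∈ Ioc (-(n : ℤ)) n, f j = ∑ j ∈ range n, (f j + f (j + 1)) := by
  induction n with
  | zero => simp
  | succ n ih =>
    have hIoc : Ioc (-((n + 1 : ℕ) : ℤ)) (n + 1 : ℕ) = insert (-(n : ℤ)) (insert ((n : ℤ) + 1)
        (Ioc (-(n : ℤ)) n)) := by
      ext j
      simp only [mem_Ioc, mem_insert]
      omega
    rw [hIoc, sum_insert (by simp; omega), sum_insert (by simp), ih, sum_range_succ, hf]
    abel

lemma Int.box_eq_union_prod (n : ℕ) :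
    (box n : Finset (ℤ × ℤ)) =
      {-(n : ℤ), (n : ℤ)} ×ˢ Icc (-(n : ℤ)) n ∪ Ioo (-(n : ℤ)) n ×ˢ {-(n : ℤ), (n : ℤ)} := by
  ext k
  simp only [Int.mem_box, mem_union, mem_product, mem_insert, mem_singleton, mem_Icc, mem_Ioo]
  omega

-- `invNormSq 0 = 0⁻¹ = 0`, so the origin contributes nothing to the shell sums.
noncomputable def invNormSq (k : ℤ × ℤ) : ℝ := ((k.1 : ℝ) ^ 2 + (k.2 : ℝ) ^ 2)⁻¹

lemma sum_box_invNormSq {n : ℕ} (hn : n ≠ 0) :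
    ∑ k ∈ box n, invNormSq k =
      4 * ∑ j ∈ range n, (((n : ℝ) ^ 2 + (j : ℝ) ^ 2)⁻¹ + ((n : ℝ) ^ 2 + ((j : ℝ) + 1) ^ 2)⁻¹) := by
  set f : ℤ → ℝ := fun j ↦ ((n : ℝ) ^ 2 + (j : ℝ) ^ 2)⁻¹
  have hneg : -(n : ℤ) ≠ n := by omega
  have hlt : -(n : ℤ) < n := by omega
  have hf : ∀ j, f (-j) = f j := fun j ↦ by simp [f]
  have hrow : ∀ b : ℤ, ∑ a ∈ {-(n : ℤ), (n : ℤ)}, invNormSq (a, b) = 2 * f b := fun b ↦ by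
    rw [sum_pair hneg]; simp [invNormSq, f]; ring
  have hcol : ∀ a : ℤ, ∑ b ∈ {-(n : ℤ), (n : ℤ)}, invNormSq (a, b) = 2 * f a := fun a ↦ by
    rw [sum_pair hneg]; simp [invNormSq, f]; ring
  have hdisj : Disjoint ({-(n : ℤ), (n : ℤ)} ×ˢ Icc (-(n : ℤ)) n)
      (Ioo (-(n : ℤ)) n ×ˢ {-(n : ℤ), (n : ℤ)}) := by
    rw [disjoint_left]
    simp only [mem_product, mem_insert, mem_singleton, mem_Icc, mem_Ioo]
    omega
  rw [Int.box_eq_union_prod n, sum_union hdisj, sum_product, sum_product, sum_comm]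
  simp only [hrow, hcol, ← mul_sum]
  have hIcc : ∑ j ∈ Icc (-(n : ℤ)) n, f j = f n + ∑ j ∈ Ioc (-(n : ℤ)) n, f j := by
    rw [← add_sum_Ioc_eq_sum_Icc hlt.le, hf]
  have hIoo : ∑ j ∈ Ioo (-(n : ℤ)) n, f j = ∑ j ∈ Ioc (-(n : ℤ)) n, f j - f n := by
    rw [← sum_Ioo_add_eq_sum_Ioc hlt]; ring
  rw [hIcc, hIoo, sum_Ioc_neg_eq_sum_range f hf n]
  push_cast [f]
  ring

lemma sum_box_invNormSq_le {n : ℕ} (hn : n ≠ 0) :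
    ∑ k ∈ box n, invNormSq k ≤ 2 * π / n + 8 / (3 * n ^ 3) := by
  have hn0 : (0 : ℝ) < n := by positivity
  have hpair : ∀ j ∈ range n,
      ((n : ℝ) ^ 2 + (j : ℝ) ^ 2)⁻¹ + ((n : ℝ) ^ 2 + ((j : ℝ) + 1) ^ 2)⁻¹ ≤
        2 / n * (arctan ((j + 1 : ℕ) / n) - arctan (j / n)) + 2 / (3 * n ^ 4) := by
    intro j hj
    have hjn : (j : ℝ) + 1 ≤ n := by exact_mod_cast mem_range.1 hj
    push_cast
    exact inv_add_inv_le_arctan_sub_arctan hn0 j.cast_nonneg (by nlinarith)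
  have htel : ∑ j ∈ range n, (arctan ((j + 1 : ℕ) / n) - arctan (j / n)) = π / 4 := by
    rw [sum_range_sub (fun j : ℕ ↦ arctan (j / n)), div_self hn0.ne', arctan_one]
    simp
  rw [sum_box_invNormSq hn]
  calc _ ≤ 4 * ∑ j ∈ range n,
        (2 / n * (arctan ((j + 1 : ℕ) / n) - arctan (j / n)) + 2 / (3 * n ^ 4)) :=
        mul_le_mul_of_nonneg_left (sum_le_sum hpair) (by norm_num)
    _ = 4 * (2 / n * (π / 4) + n * (2 / (3 * n ^ 4))) := by
        rw [sum_add_distrib, ← mul_sum, htel, sum_const, card_range, nsmul_eq_mul]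
    _ = 2 * π / n + 8 / (3 * n ^ 3) := by
        field_simp
        ring

lemma sum_range_sum_box_invNormSq_le {N : ℕ} (hN : 2 ≤ N) :
    ∑ n ∈ range (N + 1), ∑ k ∈ box n, invNormSq k + 4 / (3 * N ^ 2) ≤
      283 / 30 + 2 * π * (log (N + 1 / 2) - log (5 / 2)) := by
  induction N, hN using Nat.le_induction with
  | base =>
    simp only [sum_range_succ, range_zero, sum_empty, box_zero, sum_singleton,
      sum_box_invNormSq one_ne_zero, sum_box_invNormSq two_ne_zero]
    norm_num [invNormSq]
  | succ N hN ih =>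
    have hN2 : (2 : ℝ) ≤ N := by exact_mod_cast hN
    have hshell := sum_box_invNormSq_le (n := N + 1) (by omega)
    have hlog : ((N : ℝ) + 1)⁻¹ ≤ log (N + 1 + 1 / 2) - log (N + 1 / 2) := by
      have := inv_le_log_add_half_sub_log_sub_half (x := (N : ℝ) + 1) (by linarith)
      rwa [show (N : ℝ) + 1 - 1 / 2 = N + 1 / 2 by ring] at this
    have herr : 8 / (3 * ((N : ℝ) + 1) ^ 3) + 4 / (3 * ((N : ℝ) + 1) ^ 2) ≤ 4 / (3 * N ^ 2) := by
      rw [div_add_div _ _ (by positivity) (by positivity),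
        div_le_div_iff₀ (by positivity) (by positivity)]
      nlinarith
    have hpi := mul_le_mul_of_nonneg_left hlog (by positivity : (0 : ℝ) ≤ 2 * π)
    rw [← div_eq_mul_inv] at hpi
    rw [sum_range_succ]
    push_cast at hshell ⊢
    linarith

lemma max_natAbs_le_sqrt (k : ℤ × ℤ) :
    ((max k.1.natAbs k.2.natAbs : ℕ) : ℝ) ≤ √((k.1 : ℝ) ^ 2 + (k.2 : ℝ) ^ 2) := by
  rw [Nat.cast_max, Nat.cast_natAbs, Nat.cast_natAbs, Int.cast_abs, Int.cast_abs]
  exact max_le (abs_le_sqrt (by nlinarith)) (abs_le_sqrt (by nlinarith))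

lemma tsum_disk_invNormSq_le_sum_box (r : ℝ) :
    (∑' k : ℤ × ℤ,
        if k ≠ 0 ∧ √((k.1 : ℝ) ^ 2 + (k.2 : ℝ) ^ 2) ≤ r then invNormSq k else 0) ≤
      ∑ n ∈ range (⌊r⌋₊ + 1), ∑ k ∈ box n, invNormSq k := by
  have hdisj : (range (⌊r⌋₊ + 1) : Set ℕ).PairwiseDisjoint (box : ℕ → Finset (ℤ × ℤ)) :=
    fun m _ n _ hmn ↦ disjoint_left.2 fun k hm hn ↦ hmn ((Int.mem_box.1 hm).symm.trans
      (Int.mem_box.1 hn))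
  rw [← sum_biUnion hdisj, tsum_eq_sum]
  · exact sum_le_sum fun k _ ↦ by
      split_ifs
      · rfl
      · exact inv_nonneg.2 (by positivity)
  · intro k hk
    rw [if_neg]
    rintro ⟨-, hkr⟩
    have hbig : (⌊r⌋₊ : ℝ) + 1 ≤ max k.1.natAbs k.2.natAbs := by
      simp only [mem_biUnion, mem_range, Int.mem_box, exists_eq_right', not_lt] at hk
      exact_mod_cast Nat.succ_le_of_lt hk
    linarith [Nat.lt_floor_add_one r, max_natAbs_le_sqrt k]

/-- sum of `|k|⁻²` over nonzero lattice points with `|k| ≤ r`, `r ≥ 2`. -/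
theorem stmt3 (r : ℝ) (hr : 2 ≤ r) :
    (∑' k : ℤ × ℤ,
        if k ≠ 0 ∧ Real.sqrt ((k.1 : ℝ) ^ 2 + (k.2 : ℝ) ^ 2) ≤ r then
          ((k.1 : ℝ) ^ 2 + (k.2 : ℝ) ^ 2)⁻¹
        else 0) ≤
      4.4 + 2 * π * Real.log (r + 1 / Real.sqrt 2) := by
  set N := ⌊r⌋₊
  have hN : 2 ≤ N := Nat.le_floor (by exact_mod_cast hr)
  have hNr : (N : ℝ) ≤ r := Nat.floor_le (by linarith)
  have hsqrt : 1 / 2 ≤ 1 / √2 :=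
    one_div_le_one_div_of_le (by positivity) (sqrt_le_iff.2 ⟨by norm_num, by norm_num⟩)
  have hlogN : log (N + 1 / 2) ≤ log (r + 1 / √2) := log_le_log (by positivity) (by linarith)
  have hlog : 0.89 ≤ log (5 / 2) := by
    have h54 := one_sub_inv_le_log_of_pos (show (0 : ℝ) < 5 / 4 by norm_num)
    rw [show (5 / 2 : ℝ) = 2 * (5 / 4) by norm_num, log_mul (by norm_num) (by norm_num)]
    linarith [log_two_gt_d9]
  have hpiN := mul_le_mul_of_nonneg_left hlogN (by positivity : (0 : ℝ) ≤ 2 * π)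
  have hpi : 3 * 0.89 ≤ π * log (5 / 2) := mul_le_mul pi_gt_three.le hlog (by norm_num) pi_pos.le
  have hcorr : 0 ≤ 4 / (3 * (N : ℝ) ^ 2) := by positivity
  calc _ ≤ _ := tsum_disk_invNormSq_le_sum_box r
    _ ≤ _ := by linarith [sum_range_sum_box_invNormSq_le hN]
end

section
/- Let f: 𝕋² → ℝ be smooth on the two-dimensional torus 𝕋² = (ℝ/ℤ)², and let f̄ denote its mean. Then ‖f - f̄‖_{L²(𝕋²)} ≤ (1/2) ‖|∂₁f| + |∂₂f|‖_{L¹(𝕋²)} ≤ (1/√2) ‖∇f‖_{L¹(𝕋²)}. -/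
open MeasureTheory Real

/-- The fundamental domain `[-1/2,1/2]²` of the unit torus `𝕋²`. -/
noncomputable def sq2 : Set (ℝ × ℝ) :=
  Set.Icc ((-(1 : ℝ) / 2, -(1 : ℝ) / 2)) (((1 : ℝ) / 2, (1 : ℝ) / 2))

def II : Set ℝ := Set.Icc (-(1:ℝ)/2) (1/2)

lemma key1D_le (u u' : ℝ → ℝ) (hd : ∀ t, HasDerivAt u (u' t) t)
    (hc : Continuous u') (hper : ∀ t, u (t + 1) = u t)
    {x s : ℝ} (hx : x ∈ II) (hs : s ∈ II) (hsx : s ≤ x) :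
    |u x - u s| ≤ (1/2) * ∫ t in II, |u' t| := by
  obtain ⟨hx1, hx2⟩ := hx
  obtain ⟨hs1, hs2⟩ := hs
  have hxs1 : x ≤ s + 1 := by
    have : x ≤ (1:ℝ)/2 := hx2
    have : -(1:ℝ)/2 ≤ s := hs1
    linarith
  have hint : ∀ a b : ℝ, IntervalIntegrable u' volume a b := fun a b => hc.intervalIntegrable a b
  have hinta : ∀ a b : ℝ, IntervalIntegrable (fun t => |u' t|) volume a b :=
    fun a b => hc.abs.intervalIntegrable a b
  have hper' : ∀ t, u' (t + 1) = u' t := by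
    intro t
    have h1 : HasDerivAt (fun r : ℝ => u (r + 1)) (u' (t + 1) * 1) t :=
      (hd (t + 1)).comp t ((hasDerivAt_id t).add_const 1)
    have h2 : (fun r : ℝ => u (r + 1)) = u := funext hper
    rw [h2, mul_one] at h1
    exact h1.unique (hd t)
  have habs : Function.Periodic (fun t => |u' t|) 1 := fun t => by simp [hper' t]
  have h1 : ∫ t in s..x, u' t = u x - u s :=
    intervalIntegral.integral_eq_sub_of_hasDerivAt (fun t _ => hd t) (hint s x)
  have h2 : ∫ t in x..(s+1), u' t = u s - u x := by
    rw [intervalIntegral.integral_eq_sub_of_hasDerivAt (fun t _ => hd t) (hint x (s+1)), hper s]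
  have ha : |u x - u s| ≤ ∫ t in s..x, |u' t| := by
    rw [← h1]; exact intervalIntegral.abs_integral_le_integral_abs hsx
  have hb : |u x - u s| ≤ ∫ t in x..(s+1), |u' t| := by
    rw [abs_sub_comm, ← h2]; exact intervalIntegral.abs_integral_le_integral_abs hxs1
  have hsum : (∫ t in s..x, |u' t|) + (∫ t in x..(s+1), |u' t|) = ∫ t in s..(s+1), |u' t| :=
    intervalIntegral.integral_add_adjacent_intervals (hinta s x) (hinta x (s+1))
  have hper2 : ∫ t in s..(s+1), |u' t| = ∫ t in II, |u' t| := by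
    have h := habs.intervalIntegral_add_eq s (-(1:ℝ)/2)
    rw [h, intervalIntegral.integral_of_le (by norm_num), ← integral_Icc_eq_integral_Ioc]
    norm_num [II]
  rw [hper2] at hsum
  linarith

lemma key1D (u u' : ℝ → ℝ) (hd : ∀ t, HasDerivAt u (u' t) t)
    (hc : Continuous u') (hper : ∀ t, u (t + 1) = u t)
    {x s : ℝ} (hx : x ∈ II) (hs : s ∈ II) :
    |u x - u s| ≤ (1/2) * ∫ t in II, |u' t| := by
  rcases le_total s x with h | h
  · exact key1D_le u u' hd hc hper hx hs h
  · rw [abs_sub_comm]; exact key1D_le u u' hd hc hper hs hx h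

lemma sq2_eq : sq2 = II ×ˢ II := by rw [sq2, Set.Icc_prod_eq]; rfl
lemma vol_II : volume II = 1 := by rw [II, Real.volume_Icc]; norm_num
lemma vol_sq2 : volume sq2 = 1 := by
  rw [sq2_eq, Measure.volume_eq_prod, Measure.prod_prod, vol_II, one_mul]
lemma mem_sq2 {z : ℝ × ℝ} (hz : z ∈ sq2) : z.1 ∈ II ∧ z.2 ∈ II := by
  rw [sq2_eq] at hz; exact hz

lemma intg_cont (g : ℝ × ℝ → ℝ) (hg : Continuous g) : IntegrableOn g sq2 :=
  hg.continuousOn.integrableOn_compact isCompact_Icc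

lemma intg_cont1 (g : ℝ → ℝ) (hg : Continuous g) : IntegrableOn g II :=
  hg.continuousOn.integrableOn_compact isCompact_Icc

lemma intg_const (c : ℝ) : IntegrableOn (fun _ : ℝ × ℝ => c) sq2 :=
  (integrableOn_const_iff (C := c)).mpr (Or.inr (by rw [vol_sq2]; exact ENNReal.one_lt_top))

lemma intg_const1 (c : ℝ) : IntegrableOn (fun _ : ℝ => c) II :=
  (integrableOn_const_iff (C := c)).mpr (Or.inr (by rw [vol_II]; exact ENNReal.one_lt_top))

lemma fub1 (g : ℝ × ℝ → ℝ) (hg : Continuous g) :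
    ∫ z in sq2, g z = ∫ x in II, ∫ y in II, g (x, y) := by
  rw [sq2_eq, Measure.volume_eq_prod]
  exact setIntegral_prod g (by rw [← sq2_eq, ← Measure.volume_eq_prod]; exact intg_cont g hg)

lemma fub2 (g : ℝ × ℝ → ℝ) (hg : Continuous g) :
    ∫ z in sq2, g z = ∫ y in II, ∫ x in II, g (x, y) := by
  rw [fub1 g hg]
  apply integral_integral_swap
  rw [Measure.prod_restrict]
  exact (intg_cont (fun z => g (z.1, z.2)) (by fun_prop)).congr_set_ae (by rw [sq2_eq]; exact Filter.EventuallyEq.rfl)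

lemma int_fst (g : ℝ → ℝ) (hg : Continuous g) :
    ∫ z in sq2, g z.1 = ∫ x in II, g x := by
  rw [fub1 (fun z => g z.1) (by fun_prop)]
  simp [setIntegral_const, measureReal_def, vol_II]

lemma int_snd (g : ℝ → ℝ) (hg : Continuous g) :
    ∫ z in sq2, g z.2 = ∫ y in II, g y := by
  rw [fub2 (fun z => g z.2) (by fun_prop)]
  simp [setIntegral_const, measureReal_def, vol_II]

lemma part1 (f d1 d2 : ℝ × ℝ → ℝ) (hfc : Continuous f)
    (hd1c : Continuous d1) (hd2c : Continuous d2)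
    (hs1 : ∀ y t, HasDerivAt (fun r => f (r, y)) (d1 (t, y)) t)
    (hs2 : ∀ x t, HasDerivAt (fun r => f (x, r)) (d2 (x, t)) t)
    (hper1 : ∀ x y : ℝ, f (x + 1, y) = f (x, y))
    (hper2 : ∀ x y : ℝ, f (x, y + 1) = f (x, y)) :
    Real.sqrt (∫ z in sq2, (f z - ∫ w in sq2, f w) ^ 2) ≤
      (1 / 2) * ∫ z in sq2, (|d1 z| + |d2 z|) := by
  set m := ∫ w in sq2, f w with hm
  set F : ℝ → ℝ := fun y => ∫ t in II, |d1 (t, y)| with hF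
  set G : ℝ → ℝ := fun x => ∫ t in II, |d2 (x, t)| with hG
  have hFc : Continuous F :=
    continuous_parametric_integral_of_continuous (by fun_prop) isCompact_Icc
  have hGc : Continuous G :=
    continuous_parametric_integral_of_continuous (by fun_prop) isCompact_Icc
  set A := ∫ y in II, F y with hA
  set B := ∫ x in II, G x with hB
  have hFpos : ∀ y, 0 ≤ F y :=
    fun y => setIntegral_nonneg measurableSet_Icc (fun t _ => abs_nonneg _)
  have hGpos : ∀ x, 0 ≤ G x :=
    fun x => setIntegral_nonneg measurableSet_Icc (fun t _ => abs_nonneg _)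
  have hA0 : 0 ≤ A := setIntegral_nonneg measurableSet_Icc fun y _ => hFpos y
  have hB0 : 0 ≤ B := setIntegral_nonneg measurableSet_Icc fun x _ => hGpos x
  have p1 : ∀ (y : ℝ), ∀ x ∈ II, ∀ s ∈ II, |f (x, y) - f (s, y)| ≤ (1/2) * F y := by
    intro y x hx s hs
    exact key1D (fun r => f (r, y)) (fun t => d1 (t, y)) (hs1 y) (by fun_prop)
      (fun t => hper1 t y) hx hs
  have p2 : ∀ (x : ℝ), ∀ y ∈ II, ∀ t ∈ II, |f (x, y) - f (x, t)| ≤ (1/2) * G x := by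
    intro x y hy t ht
    exact key1D (fun r => f (x, r)) (fun t => d2 (x, t)) (hs2 x) (by fun_prop)
      (fun t => hper2 x t) hy ht
  have e2 : ∀ x y : ℝ, |f (x, y) - m| ≤ ∫ z in sq2, |f (x, y) - f z| := by
    intro x y
    have e1 : ∫ z in sq2, (f (x, y) - f z) = f (x, y) - m := by
      rw [integral_sub (intg_const _) (intg_cont f hfc), setIntegral_const, measureReal_def, vol_sq2]
      simp [hm]
    rw [← e1, ← Real.norm_eq_abs]
    calc ‖∫ z in sq2, (f (x, y) - f z)‖ ≤ ∫ z in sq2, ‖f (x, y) - f z‖ :=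
        norm_integral_le_integral_norm _
      _ = ∫ z in sq2, |f (x, y) - f z| := by simp [Real.norm_eq_abs]
  have pb1 : ∀ x ∈ II, ∀ y ∈ II, |f (x, y) - m| ≤ (1/2) * F y + (1/2) * B := by
    intro x hx y hy
    have e3 : ∫ z in sq2, |f (x, y) - f z| ≤
        ∫ z in sq2, ((1/2) * F y + (1/2) * G z.1) := by
      apply setIntegral_mono_on (intg_cont _ (by fun_prop))
        (intg_cont _ (by fun_prop)) measurableSet_Icc
      intro z hz
      obtain ⟨hz1, hz2⟩ := mem_sq2 hz
      calc |f (x, y) - f z| = |f (x, y) - f (z.1, z.2)| := by rw [Prod.mk.eta]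
        _ ≤ |f (x, y) - f (z.1, y)| + |f (z.1, y) - f (z.1, z.2)| := abs_sub_le _ _ _
        _ ≤ (1/2) * F y + (1/2) * G z.1 :=
            add_le_add (p1 y x hx z.1 hz1) (p2 z.1 y hy z.2 hz2)
    have e4 : ∫ z in sq2, ((1/2) * F y + (1/2) * G z.1) = (1/2) * F y + (1/2) * B := by
      rw [integral_add (intg_const _) (intg_cont _ (by fun_prop)), setIntegral_const, measureReal_def, vol_sq2,
        int_fst (fun x => (1/2) * G x) (by fun_prop), integral_const_mul]
      simp [hB]
    linarith [(e2 x y).trans (e3.trans_eq e4)]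
  have pb2 : ∀ x ∈ II, ∀ y ∈ II, |f (x, y) - m| ≤ (1/2) * G x + (1/2) * A := by
    intro x hx y hy
    have e3 : ∫ z in sq2, |f (x, y) - f z| ≤
        ∫ z in sq2, ((1/2) * G x + (1/2) * F z.2) := by
      apply setIntegral_mono_on (intg_cont _ (by fun_prop))
        (intg_cont _ (by fun_prop)) measurableSet_Icc
      intro z hz
      obtain ⟨hz1, hz2⟩ := mem_sq2 hz
      calc |f (x, y) - f z| = |f (x, y) - f (z.1, z.2)| := by rw [Prod.mk.eta]
        _ ≤ |f (x, y) - f (x, z.2)| + |f (x, z.2) - f (z.1, z.2)| := abs_sub_le _ _ _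
        _ ≤ (1/2) * G x + (1/2) * F z.2 :=
            add_le_add (p2 x y hy z.2 hz2) (p1 z.2 x hx z.1 hz1)
    have e4 : ∫ z in sq2, ((1/2) * G x + (1/2) * F z.2) = (1/2) * G x + (1/2) * A := by
      rw [integral_add (intg_const _) (intg_cont _ (by fun_prop)), setIntegral_const, measureReal_def, vol_sq2,
        int_snd (fun y => (1/2) * F y) (by fun_prop), integral_const_mul]
      simp [hA]
    linarith [(e2 x y).trans (e3.trans_eq e4)]
  have key : ∫ z in sq2, (f z - m) ^ 2 ≤ ((A + B) / 2) ^ 2 := by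
    have step : ∫ z in sq2, (f z - m) ^ 2 ≤
        ∫ z in sq2, ((1/2) * G z.1 + (1/2) * A) * ((1/2) * F z.2 + (1/2) * B) := by
      apply setIntegral_mono_on (intg_cont _ (by fun_prop))
        (intg_cont _ (by fun_prop)) measurableSet_Icc
      intro z hz
      obtain ⟨hz1, hz2⟩ := mem_sq2 hz
      have b1 : |f z - m| ≤ (1/2) * F z.2 + (1/2) * B := by
        have := pb1 z.1 hz1 z.2 hz2; rwa [Prod.mk.eta] at this
      have b2 : |f z - m| ≤ (1/2) * G z.1 + (1/2) * A := by
        have := pb2 z.1 hz1 z.2 hz2; rwa [Prod.mk.eta] at this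
      calc (f z - m) ^ 2 = |f z - m| * |f z - m| := by rw [← sq_abs, sq]
        _ ≤ ((1/2) * G z.1 + (1/2) * A) * ((1/2) * F z.2 + (1/2) * B) :=
            mul_le_mul b2 b1 (abs_nonneg _) (le_trans (abs_nonneg _) b2)
    have prodeq : ∫ z in sq2, ((1/2) * G z.1 + (1/2) * A) * ((1/2) * F z.2 + (1/2) * B)
        = ((1/2) * B + (1/2) * A) * ((1/2) * A + (1/2) * B) := by
      rw [sq2_eq, Measure.volume_eq_prod,
        setIntegral_prod_mul (fun x => (1/2) * G x + (1/2) * A)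
          (fun y => (1/2) * F y + (1/2) * B) II II]
      congr 1
      · rw [integral_add (intg_cont1 _ (by fun_prop)) (intg_const1 _), integral_const_mul,
          setIntegral_const, measureReal_def, vol_II]
        simp [hB]
      · rw [integral_add (intg_cont1 _ (by fun_prop)) (intg_const1 _), integral_const_mul,
          setIntegral_const, measureReal_def, vol_II]
        simp [hA]
    rw [prodeq] at step
    nlinarith [step]
  have hAB : ∫ z in sq2, (|d1 z| + |d2 z|) = A + B := by
    rw [integral_add (intg_cont _ hd1c.abs) (intg_cont _ hd2c.abs)]
    congr 1
    · rw [fub2 (fun z => |d1 z|) hd1c.abs]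
    · rw [fub1 (fun z => |d2 z|) hd2c.abs]
  rw [hAB]
  have hs := Real.sqrt_le_sqrt key
  rwa [Real.sqrt_sq (by linarith), show (A + B) / 2 = (1/2) * (A + B) by ring] at hs

/-- Poincaré-type inequality on `𝕋²`:
`‖f - f̄‖_{L²} ≤ (1/2)‖|∂₁f| + |∂₂f|‖_{L¹} ≤ (1/√2)‖∇f‖_{L¹}`. -/
theorem stmt5 (f : ℝ × ℝ → ℝ) (hf : ContDiff ℝ (⊤ : ℕ∞) f)
    (hper1 : ∀ x y : ℝ, f (x + 1, y) = f (x, y))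
    (hper2 : ∀ x y : ℝ, f (x, y + 1) = f (x, y)) :
    Real.sqrt (∫ x in sq2, (f x - ∫ y in sq2, f y) ^ 2) ≤
        (1 / 2) * ∫ x in sq2, (|fderiv ℝ f x (1, 0)| + |fderiv ℝ f x (0, 1)|) ∧
      (1 / 2) * (∫ x in sq2, (|fderiv ℝ f x (1, 0)| + |fderiv ℝ f x (0, 1)|)) ≤
        (1 / Real.sqrt 2) *
          ∫ x in sq2, Real.sqrt ((fderiv ℝ f x (1, 0)) ^ 2 + (fderiv ℝ f x (0, 1)) ^ 2) := by
  have hd1c : Continuous fun p : ℝ × ℝ => fderiv ℝ f p (1, 0) :=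
    (hf.continuous_fderiv (by simp)).clm_apply continuous_const
  have hd2c : Continuous fun p : ℝ × ℝ => fderiv ℝ f p (0, 1) :=
    (hf.continuous_fderiv (by simp)).clm_apply continuous_const
  constructor
  · apply part1 f (fun p => fderiv ℝ f p (1, 0)) (fun p => fderiv ℝ f p (0, 1))
      hf.continuous hd1c hd2c ?_ ?_ hper1 hper2
    · intro y t
      have h := (hf.differentiable (by simp) (t, y)).hasFDerivAt
      have ht : HasDerivAt (fun r : ℝ => (r, y)) ((1:ℝ), (0:ℝ)) t :=
        (hasDerivAt_id t).prodMk (hasDerivAt_const t y)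
      exact h.comp_hasDerivAt t ht
    · intro x t
      have h := (hf.differentiable (by simp) (x, t)).hasFDerivAt
      have ht : HasDerivAt (fun r : ℝ => (x, r)) ((0:ℝ), (1:ℝ)) t :=
        (hasDerivAt_const t x).prodMk (hasDerivAt_id t)
      exact h.comp_hasDerivAt t ht
  · have pt : ∀ z ∈ sq2, |fderiv ℝ f z (1, 0)| + |fderiv ℝ f z (0, 1)| ≤
        Real.sqrt 2 * Real.sqrt ((fderiv ℝ f z (1, 0)) ^ 2 + (fderiv ℝ f z (0, 1)) ^ 2) := by
      intro z _
      set a := fderiv ℝ f z (1, 0)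
      set b := fderiv ℝ f z (0, 1)
      rw [← Real.sqrt_mul (by norm_num : (0:ℝ) ≤ 2)]
      rw [show |a| + |b| = Real.sqrt ((|a| + |b|) ^ 2) from
        (Real.sqrt_sq (by positivity)).symm]
      apply Real.sqrt_le_sqrt
      nlinarith [sq_nonneg (|a| - |b|), sq_abs a, sq_abs b, abs_nonneg a, abs_nonneg b]
    have mono : ∫ z in sq2, (|fderiv ℝ f z (1, 0)| + |fderiv ℝ f z (0, 1)|) ≤
        ∫ z in sq2, Real.sqrt 2 *
          Real.sqrt ((fderiv ℝ f z (1, 0)) ^ 2 + (fderiv ℝ f z (0, 1)) ^ 2) := by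
      apply setIntegral_mono_on (intg_cont _ (by fun_prop))
        (intg_cont _ (by fun_prop)) measurableSet_Icc pt
    rw [integral_const_mul] at mono
    have hpos : (0:ℝ) < Real.sqrt 2 := Real.sqrt_pos.mpr (by norm_num)
    have h2 : Real.sqrt 2 * Real.sqrt 2 = 2 := Real.mul_self_sqrt (by norm_num)
    have hc : (1:ℝ)/2 * Real.sqrt 2 = 1 / Real.sqrt 2 := by
      rw [eq_div_iff hpos.ne']
      nlinarith
    calc (1 / 2) * (∫ x in sq2, (|fderiv ℝ f x (1, 0)| + |fderiv ℝ f x (0, 1)|))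
        ≤ (1 / 2) * (Real.sqrt 2 *
            ∫ x in sq2, Real.sqrt ((fderiv ℝ f x (1, 0)) ^ 2 + (fderiv ℝ f x (0, 1)) ^ 2)) := by
          apply mul_le_mul_of_nonneg_left mono (by norm_num)
      _ = (1 / Real.sqrt 2) *
            ∫ x in sq2, Real.sqrt ((fderiv ℝ f x (1, 0)) ^ 2 + (fderiv ℝ f x (0, 1)) ^ 2) := by
          rw [← mul_assoc, hc]
end

section
/- Let f ∈ H²(𝕋²) have mean zero. Then ‖f‖_{L^∞(𝕋²)} ≤ (√6.05 / (2π)²) ‖f‖_{Ḣ²(𝕋²)}, where ‖f‖_{Ḣ²} = ‖(2π|k|)² f̂(k)‖_{ℓ²_k(ℤ²)}. -/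
/-!
By the triangle inequality `‖f‖_∞ ≤ ∑ |f̂ k|`, and Cauchy–Schwarz against the weights `|k|⁻²`
gives `∑ |f̂ k| ≤ (2π)⁻² (∑_{k ≠ 0} |k|⁻⁴)^{1/2} ‖f‖_{Ḣ²}`. The lattice sum
`∑_{k ≠ 0} |k|⁻⁴ = 4 ζ(2) β(2) ≈ 6.027` is at most `6.05`: it is computed with rational
rounding on the box `[-15, 15]²`, and the `8 (n + 1)` lattice points on the boundary of
`[-(n+1), n+1]²` have `|k| ≥ n + 1`, so each such shell contributes at most
`8 / (n + 1)³ ≤ 4 / n² - 4 / (n + 1)²`, a telescoping tail.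
-/

open Real Finset

section CauchySchwarz

variable {ι : Type*} {f g : ι → ℝ}

theorem sum_sqrt_mul_sqrt_le_sqrt_tsum_mul_sqrt_tsum (hf₀ : ∀ i, 0 ≤ f i) (hg₀ : ∀ i, 0 ≤ g i)
    (hf : Summable f) (hg : Summable g) (s : Finset ι) :
    ∑ i ∈ s, √(f i) * √(g i) ≤ √(∑' i, f i) * √(∑' i, g i) :=
  (sum_sqrt_mul_sqrt_le s hf₀ hg₀).trans <| mul_le_mul
    (sqrt_le_sqrt <| hf.sum_le_tsum s fun i _ => hf₀ i)
    (sqrt_le_sqrt <| hg.sum_le_tsum s fun i _ => hg₀ i) (sqrt_nonneg _) (sqrt_nonneg _)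

theorem summable_sqrt_mul_sqrt (hf₀ : ∀ i, 0 ≤ f i) (hg₀ : ∀ i, 0 ≤ g i)
    (hf : Summable f) (hg : Summable g) : Summable fun i => √(f i) * √(g i) :=
  summable_of_sum_le (fun i => by positivity)
    (sum_sqrt_mul_sqrt_le_sqrt_tsum_mul_sqrt_tsum hf₀ hg₀ hf hg)

theorem tsum_sqrt_mul_sqrt_le (hf₀ : ∀ i, 0 ≤ f i) (hg₀ : ∀ i, 0 ≤ g i)
    (hf : Summable f) (hg : Summable g) :
    ∑' i, √(f i) * √(g i) ≤ √(∑' i, f i) * √(∑' i, g i) :=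
  (summable_sqrt_mul_sqrt hf₀ hg₀ hf hg).tsum_le_of_sum_le
    (sum_sqrt_mul_sqrt_le_sqrt_tsum_mul_sqrt_tsum hf₀ hg₀ hf hg)

end CauchySchwarz

theorem inv_le_div_add_one_div (d : ℕ) {N : ℕ} (hN : 0 < N) :
    (d : ℝ)⁻¹ ≤ ((N / d + 1 : ℕ) : ℝ) / N := by
  rcases d.eq_zero_or_pos with rfl | hd
  · simp only [Nat.cast_zero, inv_zero]
    positivity
  · rw [inv_le_iff_one_le_mul₀ (by positivity), div_mul_eq_mul_div, le_div_iff₀ (by positivity),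
      one_mul, mul_comm]
    exact_mod_cast (Nat.lt_mul_div_succ N hd).le

def latticeNormSq (k : ℤ × ℤ) : ℕ := k.1.natAbs ^ 2 + k.2.natAbs ^ 2

theorem cast_latticeNormSq (k : ℤ × ℤ) :
    (latticeNormSq k : ℝ) = (k.1 : ℝ) ^ 2 + (k.2 : ℝ) ^ 2 := by
  simp [latticeNormSq, Nat.cast_natAbs, sq_abs]

theorem latticeNormSq_pos {k : ℤ × ℤ} (hk : k ≠ 0) : 0 < latticeNormSq k := by
  rw [Nat.pos_iff_ne_zero]
  contrapose! hk
  simp_all [latticeNormSq, Prod.ext_iff]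

/-- `|k|⁻⁴`, with the junk value `0⁻¹ = 0` at `k = 0`. -/
noncomputable def latticeInvFourth (k : ℤ × ℤ) : ℝ := ((latticeNormSq k : ℝ) ^ 2)⁻¹

theorem latticeInvFourth_nonneg (k : ℤ × ℤ) : 0 ≤ latticeInvFourth k := by
  unfold latticeInvFourth; positivity

noncomputable def latticeBox (n : ℕ) : Finset (ℤ × ℤ) := Icc (-(n : ℤ), -(n : ℤ)) (n, n)

theorem mem_latticeBox {n : ℕ} {k : ℤ × ℤ} : k ∈ latticeBox n ↔ |k.1| ≤ n ∧ |k.2| ≤ n := by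
  simp only [latticeBox, mem_Icc, Prod.le_def, abs_le]
  tauto

theorem card_latticeBox (n : ℕ) : #(latticeBox n) = (2 * n + 1) ^ 2 := by
  rw [latticeBox, card_Icc_prod, Int.card_Icc, sq]
  congr 1 <;> omega

theorem latticeBox_mono {m n : ℕ} (h : m ≤ n) : latticeBox m ⊆ latticeBox n := fun k hk => by
  rw [mem_latticeBox] at hk ⊢
  exact ⟨hk.1.trans (by exact_mod_cast h), hk.2.trans (by exact_mod_cast h)⟩

theorem exists_subset_latticeBox (s : Finset (ℤ × ℤ)) : ∃ n, s ⊆ latticeBox n :=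
  ⟨s.sup fun k => max k.1.natAbs k.2.natAbs, fun k hk => by
    have := le_sup (f := fun k : ℤ × ℤ => max k.1.natAbs k.2.natAbs) hk
    rw [mem_latticeBox, Int.abs_eq_natAbs, Int.abs_eq_natAbs]
    omega⟩

theorem sq_le_latticeNormSq_of_notMem {m : ℕ} {k : ℤ × ℤ} (hk : k ∉ latticeBox m) :
    (m + 1) ^ 2 ≤ latticeNormSq k := by
  rw [mem_latticeBox, Int.abs_eq_natAbs, Int.abs_eq_natAbs] at hk
  unfold latticeNormSq
  rcases not_and_or.mp hk with h | h
  · nlinarith [Nat.zero_le (k.2.natAbs ^ 2), (by omega : m + 1 ≤ k.1.natAbs)]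
  · nlinarith [Nat.zero_le (k.1.natAbs ^ 2), (by omega : m + 1 ≤ k.2.natAbs)]

theorem sum_latticeInvFourth_shell_le (m : ℕ) :
    ∑ k ∈ latticeBox (m + 1) \ latticeBox m, latticeInvFourth k ≤ 8 / ((m : ℝ) + 1) ^ 3 := by
  have hterm : ∀ k ∈ latticeBox (m + 1) \ latticeBox m,
      latticeInvFourth k ≤ (((m : ℝ) + 1) ^ 4)⁻¹ := by
    intro k hk
    have h := sq_le_latticeNormSq_of_notMem (mem_sdiff.mp hk).2
    have h' : ((m : ℝ) + 1) ^ 2 ≤ latticeNormSq k := by exact_mod_cast h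
    refine inv_anti₀ (by positivity) ?_
    nlinarith
  have hcard : (#(latticeBox (m + 1) \ latticeBox m) : ℝ) = 8 * ((m : ℝ) + 1) := by
    rw [card_sdiff_of_subset (latticeBox_mono m.le_succ), Nat.cast_sub
      (card_le_card (latticeBox_mono m.le_succ)), card_latticeBox, card_latticeBox]
    push_cast
    ring
  calc _ ≤ #(latticeBox (m + 1) \ latticeBox m) • (((m : ℝ) + 1) ^ 4)⁻¹ :=
        sum_le_card_nsmul _ _ _ hterm
    _ = 8 / ((m : ℝ) + 1) ^ 3 := by
        rw [nsmul_eq_mul, hcard]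
        field_simp

set_option maxRecDepth 10000 in
/-- Rounding each `d⁻¹` up to a multiple of `10⁻⁹` turns the box sum into a natural-number
computation checked by `decide`. -/
theorem sum_latticeBox_fifteen_le :
    ∑ k ∈ latticeBox 15, latticeInvFourth k ≤ 6.05 - 4 / 15 ^ 2 :=
  calc ∑ k ∈ latticeBox 15, latticeInvFourth k
      ≤ ∑ k ∈ latticeBox 15, ((10 ^ 9 / latticeNormSq k ^ 2 + 1 : ℕ) : ℝ) / (10 ^ 9 : ℕ) :=
        sum_le_sum fun k _ => by
          rw [latticeInvFourth, ← Nat.cast_pow]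
          exact inv_le_div_add_one_div _ (by norm_num)
    _ = ((∑ k ∈ latticeBox 15, (10 ^ 9 / latticeNormSq k ^ 2 + 1) : ℕ) : ℝ) / (10 ^ 9 : ℕ) := by
        rw [← sum_div, Nat.cast_sum]
    _ = 6016124633 / 10 ^ 9 := by
        rw [show ∑ k ∈ latticeBox 15, (10 ^ 9 / latticeNormSq k ^ 2 + 1) = 6016124633 by decide]
        norm_num
    _ ≤ 6.05 - 4 / 15 ^ 2 := by norm_num

theorem sum_latticeBox_le {n : ℕ} (hn : 15 ≤ n) :
    ∑ k ∈ latticeBox n, latticeInvFourth k ≤ 6.05 - 4 / (n : ℝ) ^ 2 := by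
  induction n, hn using Nat.le_induction with
  | base => exact_mod_cast sum_latticeBox_fifteen_le
  | succ n hn ih =>
    have hn' : (15 : ℝ) ≤ n := by exact_mod_cast hn
    have htail : 8 / ((n : ℝ) + 1) ^ 3 ≤ 4 / (n : ℝ) ^ 2 - 4 / ((n : ℝ) + 1) ^ 2 := by
      rw [div_sub_div _ _ (by positivity) (by positivity),
        div_le_div_iff₀ (by positivity) (by positivity)]
      nlinarith [pow_pos (by linarith : (0 : ℝ) < n) 2, pow_pos (by linarith : (0 : ℝ) < n + 1) 2]
    rw [← sum_sdiff (latticeBox_mono n.le_succ)]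
    push_cast
    linarith [sum_latticeInvFourth_shell_le n]

theorem sum_latticeInvFourth_le (s : Finset (ℤ × ℤ)) : ∑ k ∈ s, latticeInvFourth k ≤ 6.05 := by
  obtain ⟨n, hn⟩ := exists_subset_latticeBox s
  calc ∑ k ∈ s, latticeInvFourth k
      ≤ ∑ k ∈ latticeBox (max n 15), latticeInvFourth k :=
        sum_le_sum_of_subset_of_nonneg (hn.trans (latticeBox_mono (le_max_left _ _)))
          fun k _ _ => latticeInvFourth_nonneg k
    _ ≤ 6.05 - 4 / ((max n 15 : ℕ) : ℝ) ^ 2 := sum_latticeBox_le (le_max_right _ _)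
    _ ≤ 6.05 := sub_le_self _ (by positivity)

theorem summable_latticeInvFourth : Summable latticeInvFourth :=
  summable_of_sum_le latticeInvFourth_nonneg sum_latticeInvFourth_le

theorem tsum_latticeInvFourth_le : ∑' k, latticeInvFourth k ≤ 6.05 :=
  summable_latticeInvFourth.tsum_le_of_sum_le sum_latticeInvFourth_le

/-- for a mean-zero `f ∈ H²(𝕋²)` given by its Fourier series,
`‖f‖_∞ ≤ (√6.05/(2π)²) ‖f‖_{Ḣ²}`. -/
theorem stmt6 (a : ℤ × ℤ → ℂ) (h0 : a 0 = 0)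
    (hH2 : Summable fun k : ℤ × ℤ =>
      (((2 * π) ^ 2 * ((k.1 : ℝ) ^ 2 + (k.2 : ℝ) ^ 2)) ^ 2) * ‖a k‖ ^ 2) :
    ∀ x : ℝ × ℝ,
      ‖∑' k : ℤ × ℤ,
          a k * Complex.exp (2 * π * Complex.I *
            (((k.1 : ℝ) * x.1 + (k.2 : ℝ) * x.2 : ℝ) : ℂ))‖ ≤
        Real.sqrt 6.05 / (2 * π) ^ 2 *
          Real.sqrt (∑' k : ℤ × ℤ,
            (((2 * π) ^ 2 * ((k.1 : ℝ) ^ 2 + (k.2 : ℝ) ^ 2)) ^ 2) * ‖a k‖ ^ 2) := by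
  intro x
  set H : ℤ × ℤ → ℝ := fun k => ((2 * π) ^ 2 * ((k.1 : ℝ) ^ 2 + (k.2 : ℝ) ^ 2)) ^ 2 * ‖a k‖ ^ 2
  have hH₀ : ∀ k, 0 ≤ H k := fun k => by positivity
  have hterm : ∀ k : ℤ × ℤ, ‖a k * Complex.exp (2 * π * Complex.I *
      (((k.1 : ℝ) * x.1 + (k.2 : ℝ) * x.2 : ℝ) : ℂ))‖ = ‖a k‖ := fun k => by
    rw [norm_mul, mul_comm (2 * (π : ℂ) * _), ← mul_assoc, ← Complex.ofReal_ofNat,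
      ← Complex.ofReal_mul, ← Complex.ofReal_mul, Complex.norm_exp_ofReal_mul_I, mul_one]
  have hsplit : ∀ k, ‖a k‖ = ((2 * π) ^ 2)⁻¹ * (√(latticeInvFourth k) * √(H k)) := fun k => by
    rcases eq_or_ne k 0 with rfl | hk
    · simp [H, h0]
    have hq : (0 : ℝ) < (k.1 : ℝ) ^ 2 + (k.2 : ℝ) ^ 2 := by
      rw [← cast_latticeNormSq]
      exact_mod_cast latticeNormSq_pos hk
    rw [latticeInvFourth, cast_latticeNormSq, sqrt_inv, sqrt_sq hq.le, sqrt_mul (sq_nonneg _),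
      sqrt_sq (by positivity), sqrt_sq (norm_nonneg _)]
    field_simp
  have hsum : Summable fun k => √(latticeInvFourth k) * √(H k) :=
    summable_sqrt_mul_sqrt latticeInvFourth_nonneg hH₀ summable_latticeInvFourth hH2
  calc _ ≤ ∑' k : ℤ × ℤ, ‖a k * Complex.exp (2 * π * Complex.I *
          (((k.1 : ℝ) * x.1 + (k.2 : ℝ) * x.2 : ℝ) : ℂ))‖ :=
        norm_tsum_le_tsum_norm <| (hsum.mul_left _).congr fun k => by rw [hterm, hsplit]
    _ = ((2 * π) ^ 2)⁻¹ * ∑' k, √(latticeInvFourth k) * √(H k) := by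
        rw [← tsum_mul_left]
        exact tsum_congr fun k => by rw [hterm, hsplit]
    _ ≤ ((2 * π) ^ 2)⁻¹ * (√(∑' k, latticeInvFourth k) * √(∑' k, H k)) := by
        gcongr
        exact tsum_sqrt_mul_sqrt_le latticeInvFourth_nonneg hH₀ summable_latticeInvFourth hH2
    _ ≤ ((2 * π) ^ 2)⁻¹ * (√6.05 * √(∑' k, H k)) := by
        gcongr
        exact tsum_latticeInvFourth_le
    _ = √6.05 / (2 * π) ^ 2 * √(∑' k, H k) := by ring
end

section
/- Let β > 0 and d = 3. Then (Σ_{0≠k∈ℤ³} (1 + β(2π|k|)⁴)^{-2} (2π|k|)^{-2})^{1/2} ≲ β^{-1/8}, and (Σ_{k∈ℤ³} β(2π|k|)⁴ (1 + β(2π|k|)⁴)^{-2})^{1/2} ≲ β^{-3/8}, with implied absolute constants. -/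
open Real

/-- Euclidean norm of a lattice frequency `k ∈ ℤ³`. -/
noncomputable def kn3 (k : ℤ × ℤ × ℤ) : ℝ :=
  Real.sqrt ((k.1 : ℝ) ^ 2 + (k.2.1 : ℝ) ^ 2 + (k.2.2 : ℝ) ^ 2)

/-!
Group the lattice points into the shells `‖k‖_∞ = m`, which hold at most `26 m²` points, and
use `‖k‖_∞ ≤ |k| ≤ 2 ‖k‖_∞`. At the scale `s = β^{-1/4}`, `m²` times a summand is `O(A)` for
`m ≤ s` and `O(A (s/m)²)` for `m > s`, with `A = 1` for the first sum and `A = s²` for the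
second. Summing over `m`, each sum is `O(A (s + s² ∑_{m > s} m⁻²)) = O(A s)`, i.e. `O(β^{-1/4})`
and `O(β^{-3/4})`, before square roots are taken.
-/

open Finset

namespace LatticeKernel

def supNorm (k : ℤ × ℤ × ℤ) : ℕ := max k.1.natAbs (max k.2.1.natAbs k.2.2.natAbs)

noncomputable def box (m : ℕ) : Finset (ℤ × ℤ × ℤ) :=
  Icc (-(m : ℤ)) m ×ˢ Icc (-(m : ℤ)) m ×ˢ Icc (-(m : ℤ)) m

noncomputable def shell (m : ℕ) : Finset (ℤ × ℤ × ℤ) := {k ∈ box m | supNorm k = m}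

lemma mem_box {k : ℤ × ℤ × ℤ} {m : ℕ} : k ∈ box m ↔ supNorm k ≤ m := by
  simp only [box, mem_product, mem_Icc, supNorm]
  omega

lemma mem_shell {k : ℤ × ℤ × ℤ} {m : ℕ} : k ∈ shell m ↔ supNorm k = m := by
  simp only [shell, mem_filter, mem_box, and_iff_right_iff_imp]
  exact le_of_eq

lemma card_box (m : ℕ) : #(box m) = (2 * m + 1) ^ 3 := by
  have h : #(Icc (-(m : ℤ)) m) = 2 * m + 1 := by rw [Int.card_Icc]; omega
  simp only [box, card_product, h]
  ring

lemma card_shell_le {m : ℕ} (hm : 1 ≤ m) : #(shell m) ≤ 26 * m ^ 2 := by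
  obtain ⟨n, rfl⟩ : ∃ n, m = n + 1 := ⟨m - 1, by omega⟩
  have hsub : shell (n + 1) ⊆ box (n + 1) \ box n := fun k hk => by
    rw [mem_shell] at hk
    rw [mem_sdiff, mem_box, mem_box]
    omega
  have hbox : box n ⊆ box (n + 1) := fun k hk => by rw [mem_box] at *; omega
  calc #(shell (n + 1)) ≤ #(box (n + 1) \ box n) := card_le_card hsub
    _ = (2 * (n + 1) + 1) ^ 3 - (2 * n + 1) ^ 3 := by
      rw [card_sdiff_of_subset hbox, card_box, card_box]
    _ ≤ 26 * (n + 1) ^ 2 := by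
      have : (2 * (n + 1) + 1) ^ 3 = (2 * n + 1) ^ 3 + (24 * n ^ 2 + 48 * n + 26) := by ring
      rw [this, Nat.add_sub_cancel_left]
      nlinarith

lemma one_le_supNorm {k : ℤ × ℤ × ℤ} (hk : k ≠ 0) : 1 ≤ supNorm k := by
  obtain ⟨a, b, c⟩ := k
  contrapose! hk
  simp only [supNorm] at hk
  simp only [Prod.mk_eq_zero]
  omega

lemma cast_natAbs_sq (a : ℤ) : ((a.natAbs : ℕ) : ℝ) ^ 2 = (a : ℝ) ^ 2 := by
  rw [Nat.cast_natAbs, Int.cast_abs, sq_abs]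

lemma supNorm_le_kn3 (k : ℤ × ℤ × ℤ) : (supNorm k : ℝ) ≤ kn3 k := by
  obtain ⟨a, b, c⟩ := k
  rw [kn3, Real.le_sqrt (Nat.cast_nonneg _) (by dsimp only; positivity)]
  have hcases : supNorm (a, b, c) = a.natAbs ∨ supNorm (a, b, c) = b.natAbs ∨
      supNorm (a, b, c) = c.natAbs := by
    simp only [supNorm]; omega
  rcases hcases with h | h | h <;> rw [h, cast_natAbs_sq] <;> dsimp only <;>
    nlinarith [sq_nonneg (a : ℝ), sq_nonneg (b : ℝ), sq_nonneg (c : ℝ)]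

lemma kn3_le_two_mul_supNorm (k : ℤ × ℤ × ℤ) : kn3 k ≤ 2 * supNorm k := by
  have h (a : ℤ) (ha : a.natAbs ≤ supNorm k) : (a : ℝ) ^ 2 ≤ (supNorm k : ℝ) ^ 2 := by
    rw [← cast_natAbs_sq]
    exact pow_le_pow_left₀ (Nat.cast_nonneg _) (by exact_mod_cast ha) 2
  have h1 := h k.1 (by simp only [supNorm]; omega)
  have h2 := h k.2.1 (by simp only [supNorm]; omega)
  have h3 := h k.2.2 (by simp only [supNorm]; omega)
  rw [kn3, Real.sqrt_le_iff]
  constructor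
  · positivity
  · nlinarith

lemma supNorm_le_two_pi_mul_kn3 (k : ℤ × ℤ × ℤ) : (supNorm k : ℝ) ≤ 2 * π * kn3 k := by
  have := supNorm_le_kn3 k
  nlinarith [pi_gt_three, (Nat.cast_nonneg _ : (0 : ℝ) ≤ supNorm k)]

lemma two_pi_mul_kn3_le_four_pi_mul_supNorm (k : ℤ × ℤ × ℤ) :
    2 * π * kn3 k ≤ 4 * π * supNorm k := by
  nlinarith [kn3_le_two_mul_supNorm k, pi_pos]

lemma kn3_nonneg (k : ℤ × ℤ × ℤ) : 0 ≤ kn3 k := sqrt_nonneg _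

lemma kn3_zero : kn3 0 = 0 := by simp [kn3]

lemma sum_le_sum_shell (t : Finset (ℤ × ℤ × ℤ)) (ht : (0 : ℤ × ℤ × ℤ) ∉ t) {g : ℕ → ℝ}
    (hg : ∀ m, 0 ≤ g m) :
    ∑ k ∈ t, g (supNorm k) ≤ ∑ m ∈ Icc 1 (t.sup supNorm), 26 * m ^ 2 * g m := by
  have hmaps : ∀ k ∈ t, supNorm k ∈ Icc 1 (t.sup supNorm) := fun k hk =>
    mem_Icc.2 ⟨one_le_supNorm (ne_of_mem_of_not_mem hk ht), le_sup hk⟩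
  rw [← sum_fiberwise_of_maps_to hmaps]
  refine sum_le_sum fun m hm => ?_
  have hcard : #{k ∈ t | supNorm k = m} ≤ 26 * m ^ 2 :=
    (card_le_card fun k hk => mem_shell.2 (mem_filter.1 hk).2).trans
      (card_shell_le (mem_Icc.1 hm).1)
  calc ∑ k ∈ t with supNorm k = m, g (supNorm k)
      = #{k ∈ t | supNorm k = m} * g m := by
        rw [sum_congr rfl fun k hk => by rw [(mem_filter.1 hk).2], sum_const, nsmul_eq_mul]
    _ ≤ 26 * m ^ 2 * g m := by
        gcongr
        · exact hg m
        · exact_mod_cast hcard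

lemma sum_min_one_sq_le {s : ℝ} (hs : 0 ≤ s) (M : ℕ) :
    ∑ m ∈ Icc 1 M, min 1 ((s / m) ^ 2) ≤ 3 * s := by
  set n := ⌊s⌋₊
  rw [← sum_filter_add_sum_filter_not (Icc 1 M) (· ≤ n)]
  have hbulk : ∑ m ∈ Icc 1 M with m ≤ n, min 1 ((s / m) ^ 2) ≤ s :=
    calc ∑ m ∈ Icc 1 M with m ≤ n, min 1 ((s / m) ^ 2)
        ≤ ∑ m ∈ Icc 1 M with m ≤ n, (1 : ℝ) := sum_le_sum fun m _ => min_le_left _ _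
      _ ≤ ∑ m ∈ Icc 1 n, (1 : ℝ) := by
        refine sum_le_sum_of_subset_of_nonneg (fun m hm => ?_) fun _ _ _ => zero_le_one
        simp only [mem_filter, mem_Icc] at hm ⊢
        omega
      _ ≤ s := by simpa using Nat.floor_le hs
  have htail : ∑ m ∈ Icc 1 M with ¬m ≤ n, min 1 ((s / m) ^ 2) ≤ 2 * s :=
    calc ∑ m ∈ Icc 1 M with ¬m ≤ n, min 1 ((s / m) ^ 2)
        ≤ ∑ m ∈ Icc 1 M with ¬m ≤ n, s ^ 2 * ((m : ℝ) ^ 2)⁻¹ :=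
          sum_le_sum fun m _ => (min_le_right _ _).trans_eq (by rw [div_pow, div_eq_mul_inv])
      _ ≤ ∑ m ∈ Ioo n (M + 1), s ^ 2 * ((m : ℝ) ^ 2)⁻¹ := by
        refine sum_le_sum_of_subset_of_nonneg (fun m hm => ?_) fun _ _ _ => by positivity
        simp only [mem_filter, mem_Icc, mem_Ioo] at hm ⊢
        omega
      _ ≤ s ^ 2 * (2 / (n + 1)) := by
        rw [← mul_sum]
        exact mul_le_mul_of_nonneg_left (sum_Ioo_inv_sq_le n (M + 1)) (sq_nonneg s)
      _ ≤ 2 * s := by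
        have hn : s < n + 1 := Nat.lt_floor_add_one s
        rw [mul_div_assoc', div_le_iff₀ (by positivity)]
        nlinarith
  linarith

lemma tsum_le_of_bulk_tail (F : ℤ × ℤ × ℤ → ℝ) {s A : ℝ} (hF : ∀ k, 0 ≤ F k) (hF0 : F 0 = 0)
    (hs : 0 ≤ s) (hA : 0 ≤ A)
    (hbulk : ∀ k ≠ 0, (supNorm k : ℝ) ≤ s → (supNorm k : ℝ) ^ 2 * F k ≤ A)
    (htail : ∀ k ≠ 0, s < supNorm k → (supNorm k : ℝ) ^ 2 * F k ≤ A * (s / supNorm k) ^ 2) :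
    ∑' k, F k ≤ 78 * A * s := by
  set g : ℕ → ℝ := fun m => A * min 1 ((s / m) ^ 2) / (m : ℝ) ^ 2
  have hFg : ∀ k ≠ 0, F k ≤ g (supNorm k) := by
    intro k hk
    have hm : (0 : ℝ) < supNorm k := by exact_mod_cast one_le_supNorm hk
    rw [le_div_iff₀ (by positivity), mul_comm]
    rcases le_or_gt (supNorm k : ℝ) s with h | h
    · rw [min_eq_left (one_le_pow₀ ((one_le_div hm).2 h))]
      simpa using hbulk k hk h
    · rw [min_eq_right (pow_le_one₀ (by positivity) ((div_le_one hm).2 h.le))]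
      exact htail k hk h
  refine Real.tsum_le_of_sum_le hF fun t => ?_
  calc ∑ k ∈ t, F k = ∑ k ∈ t.erase 0, F k := (sum_erase t hF0).symm
    _ ≤ ∑ k ∈ t.erase 0, g (supNorm k) := sum_le_sum fun k hk => hFg k (ne_of_mem_erase hk)
    _ ≤ ∑ m ∈ Icc 1 ((t.erase 0).sup supNorm), 26 * m ^ 2 * g m :=
        sum_le_sum_shell _ (notMem_erase 0 t) fun m => by positivity
    _ = 26 * A * ∑ m ∈ Icc 1 ((t.erase 0).sup supNorm), min 1 ((s / m) ^ 2) := by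
        rw [mul_sum]
        refine sum_congr rfl fun m hm => ?_
        have : (m : ℝ) ≠ 0 := by have := (mem_Icc.1 hm).1; positivity
        simp only [g]
        field_simp
    _ ≤ 26 * A * (3 * s) := by gcongr; exact sum_min_one_sq_le hs _
    _ = 78 * A * s := by ring

/- The summands as functions of `β` and the frequency `x = 2π|k|`: `kernelH1` is the one of the
`Ḣ¹ → L^∞` smoothing estimate, `kernelL2` the one of the `L² → L^∞` estimate. -/
noncomputable def kernelH1 (β x : ℝ) : ℝ := ((1 + β * x ^ 4)⁻¹) ^ 2 * (x⁻¹) ^ 2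

noncomputable def kernelL2 (β x : ℝ) : ℝ := β * x ^ 4 * ((1 + β * x ^ 4)⁻¹) ^ 2

section KernelBounds

variable {β s m x : ℝ}

lemma kernelH1_nonneg : 0 ≤ kernelH1 β x := by unfold kernelH1; positivity

lemma kernelL2_nonneg (hβ : 0 ≤ β) : 0 ≤ kernelL2 β x := by unfold kernelL2; positivity

lemma inv_one_add_le_one {u : ℝ} (hu : 0 ≤ u) : (1 + u)⁻¹ ≤ 1 :=
  inv_le_one_of_one_le₀ (by linarith)

lemma sq_mul_kernelH1_le_one (hβ : 0 ≤ β) (hm : 0 ≤ m) (hmx : m ≤ x) :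
    m ^ 2 * kernelH1 β x ≤ 1 :=
  calc m ^ 2 * kernelH1 β x = ((1 + β * x ^ 4)⁻¹) ^ 2 * (m / x) ^ 2 := by
        rw [kernelH1]; ring
    _ ≤ 1 := by
        have hx : 0 ≤ x := hm.trans hmx
        exact mul_le_one₀ (pow_le_one₀ (by positivity) (inv_one_add_le_one (by positivity)))
          (by positivity) (pow_le_one₀ (div_nonneg hm hx) (div_le_one_of_le₀ hmx hx))

lemma sq_mul_kernelH1_le_of_lt (hs : 0 < s) (hβs : β * s ^ 4 = 1) (hsm : s < m) (hmx : m ≤ x) :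
    m ^ 2 * kernelH1 β x ≤ (s / m) ^ 2 := by
  obtain rfl : β = (s ^ 4)⁻¹ := eq_inv_of_mul_eq_one_left hβs
  have hm : 0 < m := hs.trans hsm
  have hx : 0 < x := hm.trans_le hmx
  calc m ^ 2 * kernelH1 (s ^ 4)⁻¹ x
      ≤ m ^ 2 * ((((s ^ 4)⁻¹ * x ^ 4)⁻¹) ^ 2 * (x⁻¹) ^ 2) := by
        unfold kernelH1
        gcongr
        linarith
    _ = (s / m) ^ 8 * (m / x) ^ 10 := by field_simp
    _ ≤ (s / m) ^ 8 * 1 := by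
        gcongr
        exact pow_le_one₀ (by positivity) (div_le_one_of_le₀ hmx hx.le)
    _ ≤ (s / m) ^ 2 := by
        rw [mul_one]
        exact pow_le_pow_of_le_one (by positivity) (div_le_one_of_le₀ hsm.le hm.le) (by norm_num)

lemma sq_mul_kernelL2_le_of_le {c : ℝ} (hs : 0 < s) (hβs : β * s ^ 4 = 1) (hm : 0 ≤ m)
    (hms : m ≤ s) (hx : 0 ≤ x) (hxm : x ≤ c * m) : m ^ 2 * kernelL2 β x ≤ c ^ 4 * s ^ 2 := by
  obtain rfl : β = (s ^ 4)⁻¹ := eq_inv_of_mul_eq_one_left hβs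
  calc m ^ 2 * kernelL2 (s ^ 4)⁻¹ x ≤ m ^ 2 * ((s ^ 4)⁻¹ * x ^ 4) := by
        refine mul_le_mul_of_nonneg_left (mul_le_of_le_one_right (by positivity) ?_) (sq_nonneg m)
        exact pow_le_one₀ (by positivity) (inv_one_add_le_one (by positivity))
    _ ≤ m ^ 2 * ((s ^ 4)⁻¹ * (c * m) ^ 4) := by gcongr
    _ = c ^ 4 * s ^ 2 * (m / s) ^ 6 := by field_simp
    _ ≤ c ^ 4 * s ^ 2 := by
        refine mul_le_of_le_one_right (by positivity) (pow_le_one₀ (by positivity) ?_)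
        exact div_le_one_of_le₀ hms hs.le

lemma sq_mul_kernelL2_le_of_lt (hs : 0 < s) (hβs : β * s ^ 4 = 1) (hsm : s < m) (hmx : m ≤ x) :
    m ^ 2 * kernelL2 β x ≤ s ^ 2 * (s / m) ^ 2 := by
  obtain rfl : β = (s ^ 4)⁻¹ := eq_inv_of_mul_eq_one_left hβs
  have hm : 0 < m := hs.trans hsm
  have hx : 0 < x := hm.trans_le hmx
  calc m ^ 2 * kernelL2 (s ^ 4)⁻¹ x
      ≤ m ^ 2 * ((s ^ 4)⁻¹ * x ^ 4 * (((s ^ 4)⁻¹ * x ^ 4)⁻¹) ^ 2) := by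
        unfold kernelL2
        gcongr
        linarith
    _ = s ^ 2 * (s / m) ^ 2 * (m / x) ^ 4 := by field_simp
    _ ≤ s ^ 2 * (s / m) ^ 2 :=
        mul_le_of_le_one_right (by positivity)
          (pow_le_one₀ (by positivity) (div_le_one_of_le₀ hmx hx.le))

lemma tsum_kernelH1_le (hs : 0 < s) (hβs : β * s ^ 4 = 1) :
    ∑' k : ℤ × ℤ × ℤ, (if k ≠ 0 then kernelH1 β (2 * π * kn3 k) else 0) ≤ 78 * s := by
  have hβ : 0 ≤ β := by rw [eq_inv_of_mul_eq_one_left hβs]; positivity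
  calc _ ≤ 78 * 1 * s :=
        tsum_le_of_bulk_tail _ (fun k => by split_ifs; exacts [kernelH1_nonneg, le_rfl])
          (if_neg (not_not.2 rfl)) hs.le zero_le_one
          (fun k hk _ => by
            rw [if_pos hk]
            exact sq_mul_kernelH1_le_one hβ (Nat.cast_nonneg _) (supNorm_le_two_pi_mul_kn3 k))
          (fun k hk h => by
            rw [if_pos hk, one_mul]
            exact sq_mul_kernelH1_le_of_lt hs hβs h (supNorm_le_two_pi_mul_kn3 k))
    _ = 78 * s := by ring

lemma tsum_kernelL2_le (hs : 0 < s) (hβs : β * s ^ 4 = 1) :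
    ∑' k : ℤ × ℤ × ℤ, kernelL2 β (2 * π * kn3 k) ≤ 78 * (4 * π) ^ 4 * s ^ 3 := by
  have hβ : 0 ≤ β := by rw [eq_inv_of_mul_eq_one_left hβs]; positivity
  have hπ : 1 ≤ (4 * π) ^ 4 := one_le_pow₀ (by linarith [pi_gt_three])
  calc ∑' k : ℤ × ℤ × ℤ, kernelL2 β (2 * π * kn3 k) ≤ 78 * ((4 * π) ^ 4 * s ^ 2) * s :=
        tsum_le_of_bulk_tail _ (fun k => kernelL2_nonneg hβ) (by simp [kernelL2, kn3_zero])
          hs.le (by positivity)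
          (fun k _ h => sq_mul_kernelL2_le_of_le hs hβs (Nat.cast_nonneg _) h
            (mul_nonneg (by positivity) (kn3_nonneg k))
            (two_pi_mul_kn3_le_four_pi_mul_supNorm k))
          (fun k _ h => (sq_mul_kernelL2_le_of_lt hs hβs h (supNorm_le_two_pi_mul_kn3 k)).trans
            (by gcongr; exact le_mul_of_one_le_left (sq_nonneg s) hπ))
    _ = 78 * (4 * π) ^ 4 * s ^ 3 := by ring

end KernelBounds

end LatticeKernel

open LatticeKernel

/-- 3D kernel bounds:
`(Σ_{k≠0} (1+β(2π|k|)⁴)⁻² (2π|k|)⁻²)^{1/2} ≲ β^{-1/8}` and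
`(Σ_k β(2π|k|)⁴ (1+β(2π|k|)⁴)⁻²)^{1/2} ≲ β^{-3/8}`. -/
theorem stmt18 :
    ∃ C₁ C₂ : ℝ, 0 < C₁ ∧ 0 < C₂ ∧ ∀ β : ℝ, 0 < β →
      Real.sqrt (∑' k : ℤ × ℤ × ℤ,
          if k ≠ 0 then
            ((1 + β * (2 * π * kn3 k) ^ 4)⁻¹) ^ 2 * ((2 * π * kn3 k)⁻¹) ^ 2
          else 0) ≤ C₁ * β ^ (-(1 : ℝ) / 8) ∧
      Real.sqrt (∑' k : ℤ × ℤ × ℤ,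
          β * (2 * π * kn3 k) ^ 4 * ((1 + β * (2 * π * kn3 k) ^ 4)⁻¹) ^ 2) ≤
        C₂ * β ^ (-(3 : ℝ) / 8) := by
  refine ⟨√78, √78 * (4 * π) ^ 2, by positivity, by positivity, fun β hβ => ?_⟩
  set t := β ^ (-(1 : ℝ) / 8)
  have ht : 0 < t := rpow_pos_of_pos hβ _
  have ht_pow (n : ℕ) : t ^ n = β ^ (-(n : ℝ) / 8) := by
    rw [← rpow_natCast, ← rpow_mul hβ.le]; ring_nf
  have hβt : β * (t ^ 2) ^ 4 = 1 := by
    rw [← pow_mul, ht_pow]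
    norm_num [rpow_neg_one, hβ.ne']
  have ht3 : t ^ 3 = β ^ (-(3 : ℝ) / 8) := by rw [ht_pow]; norm_num
  constructor
  · calc _ ≤ √(78 * (t ^ 2)) := sqrt_le_sqrt (tsum_kernelH1_le (by positivity) hβt)
      _ = √78 * t := by rw [sqrt_mul (by norm_num), sqrt_sq ht.le]
  · calc _ ≤ √(78 * (4 * π) ^ 4 * (t ^ 2) ^ 3) :=
          sqrt_le_sqrt (tsum_kernelL2_le (by positivity) hβt)
      _ = √78 * (4 * π) ^ 2 * β ^ (-(3 : ℝ) / 8) := by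
        rw [← ht3, ← sqrt_sq (by positivity : 0 ≤ √78 * (4 * π) ^ 2 * t ^ 3)]
        congr 1
        rw [mul_pow (√78 * _), mul_pow √78, sq_sqrt (by norm_num)]
        ring
end

section
/- For all τ with 0 < τ ≤ (4π)^{-4}: (Σ_{0≠k∈ℤ²} (1 + τ(2π|k|)⁴)^{-2} (2π|k|)^{-2})^{1/2} ≤ (-(1/(8π)) ln τ + 0.52)^{1/2}, and for all τ > (4π)^{-4} the same sum is at most 0.8803. -/
/-!
With `c = 16π⁴τ`, the summand at `k` is the radial weight `w(m) = (1 + c m²)⁻² (4π² m)⁻¹` at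
`m = |k|²`. Folding `ℤ²` onto `ℕ²` costs a factor 4. In `ℕ²` the two axes are bounded by `ζ(2)`,
the point `(1, 1)` directly, and every other point `p` by the integral of `w(|x|²)` over the unit
cell below and to the left of `p`, since `w` is decreasing. These cells tile part of the quarter
plane outside the unit disk, where polar coordinates give
`(π/2) ∫₁^∞ r w(r²) dr = (32π)⁻¹ (log (1 + c⁻¹) - (1 + c)⁻¹)`.
For small `τ` the logarithm is at most `-log τ`; for large `τ` we use that `w` decreases in `c`
and take the bound at `c = 1/16`.
-/

open Real

/-- Euclidean norm of a lattice frequency `k ∈ ℤ²`. -/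
noncomputable def kn2 (k : ℤ × ℤ) : ℝ :=
  Real.sqrt ((k.1 : ℝ) ^ 2 + (k.2 : ℝ) ^ 2)

open MeasureTheory Set Filter Topology Function
open scoped ENNReal

def quadrantOutsideDisk : Set (ℝ × ℝ) :=
  {x | 0 ≤ x.1 ∧ 0 ≤ x.2 ∧ 1 ≤ x.1 ^ 2 + x.2 ^ 2}

theorem measurableSet_quadrantOutsideDisk : MeasurableSet quadrantOutsideDisk :=
  (measurableSet_le measurable_const measurable_fst).inter
    ((measurableSet_le measurable_const measurable_snd).inter
      (measurableSet_le measurable_const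
        (by fun_prop : Measurable fun x : ℝ × ℝ => x.1 ^ 2 + x.2 ^ 2)))

theorem cos_nonneg_and_sin_nonneg_iff {θ : ℝ} (hθ : θ ∈ Ioo (-π) π) :
    0 ≤ cos θ ∧ 0 ≤ sin θ ↔ θ ∈ Icc 0 (π / 2) := by
  refine ⟨fun ⟨hcos, hsin⟩ => ⟨?_, ?_⟩, fun h => ⟨?_, ?_⟩⟩
  · by_contra! h
    linarith [sin_neg_of_neg_of_neg_pi_lt h hθ.1]
  · by_contra! h
    linarith [cos_neg_of_pi_div_two_lt_of_lt h (by linarith [hθ.2])]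
  · exact cos_nonneg_of_mem_Icc ⟨by linarith [h.1, pi_pos], h.2⟩
  · exact sin_nonneg_of_nonneg_of_le_pi h.1 (by linarith [h.2, pi_pos])

theorem polarCoord_symm_fst_sq_add_snd_sq (p : ℝ × ℝ) :
    (polarCoord.symm p).1 ^ 2 + (polarCoord.symm p).2 ^ 2 = p.1 ^ 2 := by
  simp only [polarCoord_symm_apply]
  linear_combination p.1 ^ 2 * cos_sq_add_sin_sq p.2

theorem polarCoord_symm_mem_quadrantOutsideDisk_iff {p : ℝ × ℝ}
    (hp : p ∈ polarCoord.target) :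
    polarCoord.symm p ∈ quadrantOutsideDisk ↔ p ∈ Ici 1 ×ˢ Icc 0 (π / 2) := by
  obtain ⟨hr, hθ⟩ := hp
  have hr : 0 < p.1 := hr
  have hsq := polarCoord_symm_fst_sq_add_snd_sq p
  simp only [polarCoord_symm_apply] at hsq
  simp only [quadrantOutsideDisk, polarCoord_symm_apply, mem_ofPred_eq, hsq,
    mul_nonneg_iff_of_pos_left hr, mem_prod, mem_Ici, ← cos_nonneg_and_sin_nonneg_iff hθ,
    one_le_sq_iff_one_le_abs, abs_of_pos hr]
  tauto

theorem lintegral_quadrantOutsideDisk_radial {φ : ℝ → ℝ≥0∞} (hφ : Measurable φ) :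
    ∫⁻ x in quadrantOutsideDisk, φ (x.1 ^ 2 + x.2 ^ 2) =
      ENNReal.ofReal (π / 2) * ∫⁻ r in Ioi 1, ENNReal.ofReal r * φ (r ^ 2) := by
  set S := Ici (1 : ℝ) ×ˢ Icc 0 (π / 2)
  have hS : S ⊆ polarCoord.target := fun p hp =>
    ⟨mem_Ioi.2 (one_pos.trans_le hp.1), by linarith [hp.2.1, pi_pos],
      by linarith [hp.2.2, pi_pos]⟩
  rw [← lintegral_indicator measurableSet_quadrantOutsideDisk, ← lintegral_comp_polarCoord_symm,
    setLIntegral_congr_fun polarCoord.open_target.measurableSet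
      (g := S.indicator fun p => ENNReal.ofReal p.1 * φ (p.1 ^ 2)) ?_]
  · rw [setLIntegral_indicator (measurableSet_Ici.prod measurableSet_Icc), inter_eq_left.2 hS,
      Measure.volume_eq_prod, setLIntegral_prod _ (by fun_prop)]
    simp_rw [setLIntegral_const, Real.volume_Icc, sub_zero]
    rw [lintegral_mul_const _ (by fun_prop), mul_comm, setLIntegral_congr Ioi_ae_eq_Ici]
  · intro p hp
    dsimp only
    by_cases hmem : p ∈ S
    · rw [indicator_of_mem ((polarCoord_symm_mem_quadrantOutsideDisk_iff hp).2 hmem),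
        indicator_of_mem hmem, polarCoord_symm_fst_sq_add_snd_sq, smul_eq_mul]
    · rw [indicator_of_notMem (mt (polarCoord_symm_mem_quadrantOutsideDisk_iff hp).1 hmem),
        indicator_of_notMem hmem, smul_zero]

section Radial

variable {φ : ℝ → ℝ}

theorem integrableOn_quadrantOutsideDisk_of_integrableOn_Ioi (hφ : Measurable φ)
    (hint : IntegrableOn (fun r => r * φ (r ^ 2)) (Ioi 1)) :
    IntegrableOn (fun x : ℝ × ℝ => φ (x.1 ^ 2 + x.2 ^ 2)) quadrantOutsideDisk := by
  refine ⟨(hφ.comp (by fun_prop)).aestronglyMeasurable, ?_⟩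
  have hradial :
      ∫⁻ r in Ioi 1, ENNReal.ofReal r * ‖φ (r ^ 2)‖ₑ = ∫⁻ r in Ioi 1, ‖r * φ (r ^ 2)‖ₑ :=
    setLIntegral_congr_fun measurableSet_Ioi fun r (hr : 1 < r) => by
      rw [enorm_mul, Real.enorm_of_nonneg (r := r) (by linarith)]
  change ∫⁻ x in quadrantOutsideDisk, (fun m => ‖φ m‖ₑ) (x.1 ^ 2 + x.2 ^ 2) < ⊤
  rw [lintegral_quadrantOutsideDisk_radial hφ.enorm, hradial]
  exact ENNReal.mul_lt_top ENNReal.ofReal_lt_top hint.2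

theorem setIntegral_quadrantOutsideDisk_eq (hφ : Measurable φ) (hφ0 : ∀ m, 1 ≤ m → 0 ≤ φ m)
    (hint : IntegrableOn (fun r => r * φ (r ^ 2)) (Ioi 1)) :
    ∫ x in quadrantOutsideDisk, φ (x.1 ^ 2 + x.2 ^ 2) =
      π / 2 * ∫ r in Ioi 1, r * φ (r ^ 2) := by
  have hnonneg : ∀ r ∈ Ioi (1 : ℝ), 0 ≤ r * φ (r ^ 2) := fun r (hr : 1 < r) =>
    mul_nonneg (by linarith) (hφ0 _ (by nlinarith))
  have hW : 0 ≤ᵐ[volume.restrict quadrantOutsideDisk] fun x : ℝ × ℝ => φ (x.1 ^ 2 + x.2 ^ 2) :=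
    ae_restrict_of_forall_mem measurableSet_quadrantOutsideDisk fun x hx => hφ0 _ hx.2.2
  rw [← ENNReal.ofReal_eq_ofReal_iff (integral_nonneg_of_ae hW)
    (mul_nonneg (by linarith [pi_pos]) (setIntegral_nonneg measurableSet_Ioi hnonneg)),
    ofReal_integral_eq_lintegral_ofReal
      (integrableOn_quadrantOutsideDisk_of_integrableOn_Ioi hφ hint) hW,
    ENNReal.ofReal_mul (by linarith [pi_pos]),
    ofReal_integral_eq_lintegral_ofReal hint
      (ae_restrict_of_forall_mem measurableSet_Ioi hnonneg)]
  change ∫⁻ x in quadrantOutsideDisk,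
    (fun m => ENNReal.ofReal (φ m)) (x.1 ^ 2 + x.2 ^ 2) = _
  rw [lintegral_quadrantOutsideDisk_radial hφ.ennreal_ofReal]
  congr 1
  exact setLIntegral_congr_fun measurableSet_Ioi fun r (hr : 1 < r) =>
    (ENNReal.ofReal_mul (by linarith)).symm

end Radial

def latticeCell (p : ℕ × ℕ) : Set (ℝ × ℝ) :=
  Ioc ((p.1 : ℝ) - 1) p.1 ×ˢ Ioc ((p.2 : ℝ) - 1) p.2

theorem measurableSet_latticeCell (p : ℕ × ℕ) : MeasurableSet (latticeCell p) :=
  measurableSet_Ioc.prod measurableSet_Ioc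

theorem volume_latticeCell (p : ℕ × ℕ) : volume (latticeCell p) = 1 := by
  simp [latticeCell, Measure.volume_eq_prod, Measure.prod_prod]

theorem ceil_eq_of_mem_latticeCell {p : ℕ × ℕ} {x : ℝ × ℝ} (hx : x ∈ latticeCell p) :
    ⌈x.1⌉ = p.1 ∧ ⌈x.2⌉ = p.2 := by
  simp only [Int.ceil_eq_iff, Int.cast_natCast]
  exact ⟨hx.1, hx.2⟩

theorem pairwise_disjoint_latticeCell : Pairwise (Disjoint on latticeCell) := by
  intro p q hpq
  refine Set.disjoint_left.2 fun x hxp hxq => hpq ?_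
  obtain ⟨hp1, hp2⟩ := ceil_eq_of_mem_latticeCell hxp
  obtain ⟨hq1, hq2⟩ := ceil_eq_of_mem_latticeCell hxq
  exact Prod.ext (by omega) (by omega)

section Cells

variable {p : ℕ × ℕ} {x : ℝ × ℝ}

theorem sq_add_sq_le_of_mem_latticeCell (hp1 : 1 ≤ p.1) (hp2 : 1 ≤ p.2)
    (hx : x ∈ latticeCell p) :
    x.1 ^ 2 + x.2 ^ 2 ≤ (p.1 : ℝ) ^ 2 + (p.2 : ℝ) ^ 2 := by
  obtain ⟨⟨hx1, hx1'⟩, hx2, hx2'⟩ := hx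
  have : (1 : ℝ) ≤ p.1 := by exact_mod_cast hp1
  have : (1 : ℝ) ≤ p.2 := by exact_mod_cast hp2
  gcongr <;> linarith

theorem latticeCell_subset_quadrantOutsideDisk (hp1 : 1 ≤ p.1) (hp2 : 1 ≤ p.2)
    (hp : p ≠ (1, 1)) :
    latticeCell p ⊆ quadrantOutsideDisk := by
  rintro x ⟨⟨hx1, hx1'⟩, hx2, hx2'⟩
  have : (1 : ℝ) ≤ p.1 := by exact_mod_cast hp1
  have : (1 : ℝ) ≤ p.2 := by exact_mod_cast hp2
  have h2 : (2 : ℝ) ≤ p.1 ∨ (2 : ℝ) ≤ p.2 := by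
    have : 2 ≤ p.1 ∨ 2 ≤ p.2 := by
      by_contra! h
      exact hp (Prod.ext (by omega) (by omega))
    exact_mod_cast this
  refine ⟨by linarith, by linarith, ?_⟩
  rcases h2 with h2 | h2 <;> nlinarith

end Cells

section LatticeSums

variable {φ : ℝ → ℝ}

theorem le_setIntegral_latticeCell (hφ : AntitoneOn φ (Ici 1)) {p : ℕ × ℕ} (hp1 : 1 ≤ p.1)
    (hp2 : 1 ≤ p.2) (hp : p ≠ (1, 1))
    (hint : IntegrableOn (fun x : ℝ × ℝ => φ (x.1 ^ 2 + x.2 ^ 2)) (latticeCell p)) :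
    φ ((p.1 : ℝ) ^ 2 + (p.2 : ℝ) ^ 2) ≤ ∫ x in latticeCell p, φ (x.1 ^ 2 + x.2 ^ 2) := by
  have hle : ∀ x ∈ latticeCell p, φ ((p.1 : ℝ) ^ 2 + (p.2 : ℝ) ^ 2) ≤ φ (x.1 ^ 2 + x.2 ^ 2) :=
    fun x hx =>
      have hx1 : 1 ≤ x.1 ^ 2 + x.2 ^ 2 := (latticeCell_subset_quadrantOutsideDisk hp1 hp2 hp hx).2.2
      hφ hx1 (hx1.trans (sq_add_sq_le_of_mem_latticeCell hp1 hp2 hx))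
        (sq_add_sq_le_of_mem_latticeCell hp1 hp2 hx)
  simpa [measureReal_def, volume_latticeCell] using
    setIntegral_ge_of_const_le_real (measurableSet_latticeCell p) (by simp [volume_latticeCell])
      hle hint

theorem sum_le_setIntegral_quadrantOutsideDisk (hφ : AntitoneOn φ (Ici 1))
    (hφ0 : ∀ m, 1 ≤ m → 0 ≤ φ m)
    (hint : IntegrableOn (fun x : ℝ × ℝ => φ (x.1 ^ 2 + x.2 ^ 2)) quadrantOutsideDisk)
    (t : Finset (ℕ × ℕ)) (ht : ∀ p ∈ t, 1 ≤ p.1 ∧ 1 ≤ p.2 ∧ p ≠ (1, 1)) :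
    ∑ p ∈ t, φ ((p.1 : ℝ) ^ 2 + (p.2 : ℝ) ^ 2) ≤
      ∫ x in quadrantOutsideDisk, φ (x.1 ^ 2 + x.2 ^ 2) := by
  have hsub : ∀ p ∈ t, latticeCell p ⊆ quadrantOutsideDisk := fun p hp =>
    latticeCell_subset_quadrantOutsideDisk (ht p hp).1 (ht p hp).2.1 (ht p hp).2.2
  calc ∑ p ∈ t, φ ((p.1 : ℝ) ^ 2 + (p.2 : ℝ) ^ 2)
      ≤ ∑ p ∈ t, ∫ x in latticeCell p, φ (x.1 ^ 2 + x.2 ^ 2) :=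
        Finset.sum_le_sum fun p hp =>
          le_setIntegral_latticeCell hφ (ht p hp).1 (ht p hp).2.1 (ht p hp).2.2
            (hint.mono_set (hsub p hp))
    _ = ∫ x in ⋃ p ∈ t, latticeCell p, φ (x.1 ^ 2 + x.2 ^ 2) :=
        (integral_biUnion_finset t (fun p _ => measurableSet_latticeCell p)
          (pairwise_disjoint_latticeCell.set_pairwise _)
          fun p hp => hint.mono_set (hsub p hp)).symm
    _ ≤ ∫ x in quadrantOutsideDisk, φ (x.1 ^ 2 + x.2 ^ 2) :=
        setIntegral_mono_set hint
          (ae_restrict_of_forall_mem measurableSet_quadrantOutsideDisk fun x hx => hφ0 _ hx.2.2)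
          (iUnion₂_subset hsub).eventuallyLE

theorem Finset.sum_comp_le_tsum_of_injOn {α β : Type*} {f : β → ℝ} {g : α → β} {s : Finset α}
    (hg : InjOn g s) (hf : ∀ b, 0 ≤ f b) (hsum : Summable f) :
    ∑ a ∈ s, f (g a) ≤ ∑' b, f b := by
  classical
  rw [← Finset.sum_image hg]
  exact hsum.sum_le_tsum _ fun b _ => hf b

theorem sum_filter_snd_eq_zero_le_tsum (hφ0 : ∀ m, 0 ≤ m → 0 ≤ φ m)
    (hsum : Summable fun n : ℕ => φ ((n : ℝ) ^ 2)) (t : Finset (ℕ × ℕ)) :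
    ∑ p ∈ t with p.2 = 0, φ ((p.1 : ℝ) ^ 2 + (p.2 : ℝ) ^ 2) ≤ ∑' n : ℕ, φ ((n : ℝ) ^ 2) := by
  refine le_of_eq_of_le (Finset.sum_congr rfl fun p hp => ?_)
    (Finset.sum_comp_le_tsum_of_injOn (g := Prod.fst) ?_ (fun _ => hφ0 _ (sq_nonneg _)) hsum)
  · simp [(Finset.mem_filter.1 hp).2]
  · intro p hp q hq hpq
    exact Prod.ext hpq ((Finset.mem_filter.1 hp).2.trans (Finset.mem_filter.1 hq).2.symm)

theorem sum_filter_fst_eq_zero_le_tsum (hφ0 : ∀ m, 0 ≤ m → 0 ≤ φ m)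
    (hsum : Summable fun n : ℕ => φ ((n : ℝ) ^ 2)) (t : Finset (ℕ × ℕ)) :
    ∑ p ∈ t with p.1 = 0, φ ((p.1 : ℝ) ^ 2 + (p.2 : ℝ) ^ 2) ≤ ∑' n : ℕ, φ ((n : ℝ) ^ 2) := by
  refine le_of_eq_of_le (Finset.sum_congr rfl fun p hp => ?_)
    (Finset.sum_comp_le_tsum_of_injOn (g := Prod.snd) ?_ (fun _ => hφ0 _ (sq_nonneg _)) hsum)
  · simp [(Finset.mem_filter.1 hp).2]
  · intro p hp q hq hpq
    exact Prod.ext ((Finset.mem_filter.1 hp).2.trans (Finset.mem_filter.1 hq).2.symm) hpq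

theorem sum_quadrant_le (hφ : AntitoneOn φ (Ici 1)) (hφ0 : ∀ m, 0 ≤ m → 0 ≤ φ m)
    (hsum : Summable fun n : ℕ => φ ((n : ℝ) ^ 2))
    (hint : IntegrableOn (fun x : ℝ × ℝ => φ (x.1 ^ 2 + x.2 ^ 2)) quadrantOutsideDisk)
    (t : Finset (ℕ × ℕ)) :
    ∑ p ∈ t, φ ((p.1 : ℝ) ^ 2 + (p.2 : ℝ) ^ 2) ≤
      2 * ∑' n : ℕ, φ ((n : ℝ) ^ 2) + φ 2 + ∫ x in quadrantOutsideDisk, φ (x.1 ^ 2 + x.2 ^ 2) := by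
  set t₁ := t.filter fun p => p.2 ≠ 0
  set t₂ := t₁.filter fun p => p.1 ≠ 0
  have hcorner : ∑ p ∈ t₂ with p = (1, 1), φ ((p.1 : ℝ) ^ 2 + (p.2 : ℝ) ^ 2) ≤ φ 2 := by
    rw [Finset.sum_filter, Finset.sum_ite_eq']
    split_ifs
    · norm_num
    · exact hφ0 2 zero_le_two
  have hcells : ∑ p ∈ t₂ with p ≠ (1, 1), φ ((p.1 : ℝ) ^ 2 + (p.2 : ℝ) ^ 2) ≤
      ∫ x in quadrantOutsideDisk, φ (x.1 ^ 2 + x.2 ^ 2) :=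
    sum_le_setIntegral_quadrantOutsideDisk hφ (fun m hm => hφ0 m (by linarith)) hint _
      fun p hp => by
        simp only [t₂, t₁, Finset.mem_filter] at hp
        exact ⟨Nat.one_le_iff_ne_zero.2 hp.1.2, Nat.one_le_iff_ne_zero.2 hp.1.1.2, hp.2⟩
  rw [← Finset.sum_filter_add_sum_filter_not t (fun p => p.2 = 0),
    ← Finset.sum_filter_add_sum_filter_not t₁ (fun p => p.1 = 0),
    ← Finset.sum_filter_add_sum_filter_not t₂ (fun p => p = (1, 1))]
  linarith [sum_filter_snd_eq_zero_le_tsum hφ0 hsum t, sum_filter_fst_eq_zero_le_tsum hφ0 hsum t₁]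

end LatticeSums

theorem sum_le_four_mul_sum_image_natAbs {f : ℕ × ℕ → ℝ} (hf : ∀ p, 0 ≤ f p)
    (s : Finset (ℤ × ℤ)) :
    ∑ k ∈ s, f (k.1.natAbs, k.2.natAbs) ≤
      4 * ∑ p ∈ s.image (fun k => (k.1.natAbs, k.2.natAbs)), f p := by
  classical
  rw [Finset.sum_comp, Finset.mul_sum]
  refine Finset.sum_le_sum fun p _ => ?_
  rw [nsmul_eq_mul]
  refine mul_le_mul_of_nonneg_right ?_ (hf p)
  have hfiber : {k ∈ s | (k.1.natAbs, k.2.natAbs) = p} ⊆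
      ({(p.1 : ℤ), -(p.1 : ℤ)} ×ˢ {(p.2 : ℤ), -(p.2 : ℤ)}) := by
    intro k hk
    obtain ⟨h1, h2⟩ := Prod.ext_iff.1 (Finset.mem_filter.1 hk).2
    simpa [Finset.mem_product] using ⟨Int.natAbs_eq_iff.1 h1, Int.natAbs_eq_iff.1 h2⟩
  have hcard : ({k ∈ s | (k.1.natAbs, k.2.natAbs) = p} : Finset _).card ≤ 4 :=
    (Finset.card_le_card hfiber).trans <| by
      rw [Finset.card_product]
      exact Nat.mul_le_mul (Finset.card_le_two) (Finset.card_le_two)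
  exact_mod_cast hcard

noncomputable def resolventWeight (c m : ℝ) : ℝ :=
  ((1 + c * m ^ 2)⁻¹) ^ 2 * (4 * π ^ 2 * m)⁻¹

section ResolventWeight

variable {c m : ℝ}

theorem resolventWeight_nonneg (hm : 0 ≤ m) : 0 ≤ resolventWeight c m := by
  unfold resolventWeight
  positivity

theorem resolventWeight_le (hc : 0 ≤ c) (hm : 0 ≤ m) : resolventWeight c m ≤ (4 * π ^ 2 * m)⁻¹ :=
  mul_le_of_le_one_left (by positivity)
    (pow_le_one₀ (by positivity) (inv_le_one_of_one_le₀ (by nlinarith [sq_nonneg m])))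

theorem resolventWeight_anti_left {c' : ℝ} (hc : 0 ≤ c) (hcc' : c ≤ c') (hm : 0 ≤ m) :
    resolventWeight c' m ≤ resolventWeight c m := by
  unfold resolventWeight
  gcongr
  exact inv_nonneg.2 (add_nonneg zero_le_one (mul_nonneg (hc.trans hcc') (sq_nonneg m)))

theorem antitoneOn_resolventWeight (hc : 0 ≤ c) : AntitoneOn (resolventWeight c) (Ioi 0) :=
  fun m (hm : 0 < m) m' (hm' : 0 < m') hmm' => by
    unfold resolventWeight
    gcongr

theorem measurable_resolventWeight (c : ℝ) : Measurable (resolventWeight c) := by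
  unfold resolventWeight
  fun_prop

noncomputable def resolventWeightPrimitive (c r : ℝ) : ℝ :=
  (16 * π ^ 2)⁻¹ * ((1 + c * r ^ 4)⁻¹ - log (1 + (c * r ^ 4)⁻¹))

theorem hasDerivAt_resolventWeightPrimitive (hc : 0 < c) {r : ℝ} (hr : 0 < r) :
    HasDerivAt (resolventWeightPrimitive c) (r * resolventWeight c (r ^ 2)) r := by
  have hu : HasDerivAt (fun r => c * r ^ 4) (c * (4 * r ^ 3)) r := by
    simpa using (hasDerivAt_pow 4 r).const_mul c
  have hu0 : 0 < c * r ^ 4 := by positivity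
  have h := ((hu.const_add 1).inv (add_pos one_pos hu0).ne').sub
    (((hu.inv hu0.ne').const_add 1).log (add_pos one_pos (inv_pos.2 hu0)).ne')
  refine (h.const_mul (16 * π ^ 2)⁻¹).congr_deriv ?_
  simp only [resolventWeight, Pi.inv_apply]
  field_simp
  ring

theorem tendsto_resolventWeightPrimitive (hc : 0 < c) :
    Tendsto (resolventWeightPrimitive c) atTop (𝓝 0) := by
  have hu : Tendsto (fun r : ℝ => c * r ^ 4) atTop atTop :=
    (tendsto_pow_atTop (by norm_num)).const_mul_atTop hc
  have h1 : Tendsto (fun u : ℝ => (1 + u)⁻¹) atTop (𝓝 0) :=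
    tendsto_inv_atTop_zero.comp (tendsto_atTop_add_const_left _ 1 tendsto_id)
  have h2 : Tendsto (fun u : ℝ => log (1 + u⁻¹)) atTop (𝓝 0) := by
    simpa [Function.comp_def] using
      (continuousAt_log (by norm_num : (1 : ℝ) + 0 ≠ 0)).tendsto.comp
        (tendsto_inv_atTop_zero.const_add 1)
  have h := ((h1.sub h2).comp hu).const_mul (16 * π ^ 2)⁻¹
  rw [sub_zero, mul_zero] at h
  exact h

theorem integrableOn_mul_resolventWeight (hc : 0 < c) :
    IntegrableOn (fun r => r * resolventWeight c (r ^ 2)) (Ioi 1) :=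
  integrableOn_Ioi_deriv_of_nonneg'
    (fun r (hr : 1 ≤ r) => hasDerivAt_resolventWeightPrimitive hc (by linarith))
    (fun r (hr : 1 < r) => mul_nonneg (by linarith) (resolventWeight_nonneg (sq_nonneg r)))
    (tendsto_resolventWeightPrimitive hc)

theorem integral_mul_resolventWeight (hc : 0 < c) :
    ∫ r in Ioi 1, r * resolventWeight c (r ^ 2) =
      (16 * π ^ 2)⁻¹ * (log (1 + c⁻¹) - (1 + c)⁻¹) := by
  rw [integral_Ioi_of_hasDerivAt_of_nonneg'
    (fun r (hr : 1 ≤ r) => hasDerivAt_resolventWeightPrimitive hc (by linarith))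
    (fun r (hr : 1 < r) => mul_nonneg (by linarith) (resolventWeight_nonneg (sq_nonneg r)))
    (tendsto_resolventWeightPrimitive hc), resolventWeightPrimitive]
  simp only [one_pow, mul_one]
  ring

end ResolventWeight

section LatticeSum

variable {c : ℝ}

theorem hasSum_inv_four_pi_sq_mul_inv_sq :
    HasSum (fun n : ℕ => (4 * π ^ 2 * (n : ℝ) ^ 2)⁻¹) (1 / 24) := by
  have h : (fun n : ℕ => (4 * π ^ 2 * (n : ℝ) ^ 2)⁻¹) =
      fun n : ℕ => (4 * π ^ 2)⁻¹ * (1 / (n : ℝ) ^ 2) := by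
    ext n
    rw [mul_inv, one_div]
  rw [h, show (1 / 24 : ℝ) = (4 * π ^ 2)⁻¹ * (π ^ 2 / 6) by field_simp; norm_num]
  exact hasSum_zeta_two.mul_left _

theorem summable_resolventWeight_sq (hc : 0 ≤ c) :
    Summable fun n : ℕ => resolventWeight c ((n : ℝ) ^ 2) :=
  hasSum_inv_four_pi_sq_mul_inv_sq.summable.of_nonneg_of_le
    (fun _ => resolventWeight_nonneg (sq_nonneg _)) fun _ => resolventWeight_le hc (sq_nonneg _)

theorem tsum_resolventWeight_sq_le (hc : 0 ≤ c) :
    ∑' n : ℕ, resolventWeight c ((n : ℝ) ^ 2) ≤ 1 / 24 :=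
  hasSum_le (fun _ => resolventWeight_le hc (sq_nonneg _))
    (summable_resolventWeight_sq hc).hasSum hasSum_inv_four_pi_sq_mul_inv_sq

theorem sum_resolventWeight_le (hc : 0 < c) (s : Finset (ℤ × ℤ)) :
    ∑ k ∈ s, resolventWeight c ((k.1 : ℝ) ^ 2 + (k.2 : ℝ) ^ 2) ≤
      1 / 3 + (2 * π ^ 2)⁻¹ + (8 * π)⁻¹ * (log (1 + c⁻¹) - (1 + c)⁻¹) := by
  have hW : ∫ x in quadrantOutsideDisk, resolventWeight c (x.1 ^ 2 + x.2 ^ 2) =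
      π / 2 * ((16 * π ^ 2)⁻¹ * (log (1 + c⁻¹) - (1 + c)⁻¹)) := by
    rw [setIntegral_quadrantOutsideDisk_eq (measurable_resolventWeight c)
      (fun m hm => resolventWeight_nonneg (by linarith)) (integrableOn_mul_resolventWeight hc),
      integral_mul_resolventWeight hc]
  have hcorner : resolventWeight c 2 ≤ (8 * π ^ 2)⁻¹ :=
    (resolventWeight_le hc.le zero_le_two).trans_eq (by ring)
  calc ∑ k ∈ s, resolventWeight c ((k.1 : ℝ) ^ 2 + (k.2 : ℝ) ^ 2)
      = ∑ k ∈ s,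
          resolventWeight c (((k.1.natAbs : ℕ) : ℝ) ^ 2 + ((k.2.natAbs : ℕ) : ℝ) ^ 2) := by
        simp only [Nat.cast_natAbs, Int.cast_abs, sq_abs]
    _ ≤ 4 * ∑ p ∈ s.image (fun k => ((k.1.natAbs, k.2.natAbs) : ℕ × ℕ)),
          resolventWeight c ((p.1 : ℝ) ^ 2 + (p.2 : ℝ) ^ 2) :=
        sum_le_four_mul_sum_image_natAbs
          (f := fun p : ℕ × ℕ => resolventWeight c ((p.1 : ℝ) ^ 2 + (p.2 : ℝ) ^ 2))
          (fun _ => resolventWeight_nonneg (by positivity)) s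
    _ ≤ 4 * (2 * ∑' n : ℕ, resolventWeight c ((n : ℝ) ^ 2) + resolventWeight c 2 +
          ∫ x in quadrantOutsideDisk, resolventWeight c (x.1 ^ 2 + x.2 ^ 2)) := by
        gcongr
        exact sum_quadrant_le
          ((antitoneOn_resolventWeight hc.le).mono (Ici_subset_Ioi.2 one_pos))
          (fun _ hm => resolventWeight_nonneg hm) (summable_resolventWeight_sq hc.le)
          (integrableOn_quadrantOutsideDisk_of_integrableOn_Ioi (measurable_resolventWeight c)
            (integrableOn_mul_resolventWeight hc)) _
    _ ≤ 4 * (2 * (1 / 24) + (8 * π ^ 2)⁻¹ +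
          π / 2 * ((16 * π ^ 2)⁻¹ * (log (1 + c⁻¹) - (1 + c)⁻¹))) := by
        rw [hW]
        gcongr
        exact tsum_resolventWeight_sq_le hc.le
    _ = 1 / 3 + (2 * π ^ 2)⁻¹ + (8 * π)⁻¹ * (log (1 + c⁻¹) - (1 + c)⁻¹) := by
        field_simp
        ring

-- Bounding every finite partial sum needs no summability: a non-summable `tsum` is `0`.
theorem tsum_resolventWeight_le {c' : ℝ} (hc : 0 < c) (hcc' : c ≤ c') :
    ∑' k : ℤ × ℤ, resolventWeight c' ((k.1 : ℝ) ^ 2 + (k.2 : ℝ) ^ 2) ≤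
      1 / 3 + (2 * π ^ 2)⁻¹ + (8 * π)⁻¹ * (log (1 + c⁻¹) - (1 + c)⁻¹) :=
  tsum_le_of_sum_le' (by simpa using sum_resolventWeight_le hc ∅) fun s =>
    (Finset.sum_le_sum fun k _ => resolventWeight_anti_left hc.le hcc' (by positivity)).trans
      (sum_resolventWeight_le hc s)

end LatticeSum

theorem eighty_one_le_pi_pow_four : 81 ≤ π ^ 4 := by
  calc (81 : ℝ) = 3 ^ 4 := by norm_num
    _ ≤ π ^ 4 := pow_le_pow_left₀ (by norm_num) pi_gt_three.le 4

theorem inv_two_mul_pi_sq_le : (2 * π ^ 2)⁻¹ ≤ 1 / 18 := by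
  rw [one_div]
  exact inv_anti₀ (by norm_num) (by nlinarith [pi_gt_three])

theorem inv_eight_mul_pi_le : (8 * π)⁻¹ ≤ 1 / 24 := by
  rw [one_div]
  exact inv_anti₀ (by norm_num) (by linarith [pi_gt_three])

theorem log_seventeen_le_three : log 17 ≤ 3 := by
  rw [log_le_iff_le_exp (by norm_num), show (3 : ℝ) = (3 : ℕ) by norm_num, ← exp_one_pow]
  calc (17 : ℝ) ≤ 2.7 ^ 3 := by norm_num
    _ ≤ exp 1 ^ 3 := pow_le_pow_left₀ (by norm_num) (by linarith [exp_one_gt_d9]) 3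

theorem tsum_resolventWeight_le_of_le {τ : ℝ} (hτ : 0 < τ) (hτ' : τ ≤ ((4 * π) ^ 4)⁻¹) :
    ∑' k : ℤ × ℤ, resolventWeight (16 * π ^ 4 * τ) ((k.1 : ℝ) ^ 2 + (k.2 : ℝ) ^ 2) ≤
      -(1 / (8 * π)) * log τ + 0.52 := by
  have hc : 0 < 16 * π ^ 4 * τ := by positivity
  have hτ2 : τ ≤ 1 / 2 := hτ'.trans (by
    rw [one_div]; exact inv_anti₀ (by norm_num) (by linarith [eighty_one_le_pi_pow_four]))
  have hlog : log (1 + (16 * π ^ 4 * τ)⁻¹) ≤ -log τ := by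
    rw [← log_inv]
    refine log_le_log (by positivity) ?_
    rw [show 1 + (16 * π ^ 4 * τ)⁻¹ = (τ + (16 * π ^ 4)⁻¹) * τ⁻¹ by field_simp]
    refine mul_le_of_le_one_left (by positivity) ?_
    have : (16 * π ^ 4)⁻¹ ≤ 1 / 2 := by
      rw [one_div]; exact inv_anti₀ (by norm_num) (by linarith [eighty_one_le_pi_pow_four])
    linarith
  have hmain : (8 * π)⁻¹ * (log (1 + (16 * π ^ 4 * τ)⁻¹) - (1 + 16 * π ^ 4 * τ)⁻¹) ≤
      -(1 / (8 * π)) * log τ := by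
    rw [neg_mul, ← mul_neg, one_div]
    have hinv : 0 < (1 + 16 * π ^ 4 * τ)⁻¹ := by positivity
    exact mul_le_mul_of_nonneg_left (by linarith) (by positivity)
  linarith [tsum_resolventWeight_le hc le_rfl, inv_two_mul_pi_sq_le]

theorem tsum_resolventWeight_le_of_lt {τ : ℝ} (hτ : ((4 * π) ^ 4)⁻¹ < τ) :
    ∑' k : ℤ × ℤ, resolventWeight (16 * π ^ 4 * τ) ((k.1 : ℝ) ^ 2 + (k.2 : ℝ) ^ 2) ≤
      0.8803 ^ 2 := by
  have hc : (1 / 16 : ℝ) ≤ 16 * π ^ 4 * τ := by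
    rw [inv_lt_iff_one_lt_mul₀ (by positivity)] at hτ
    linarith
  have hlog : log (1 + (1 / 16 : ℝ)⁻¹) - (1 + 1 / 16 : ℝ)⁻¹ ≤ 3 := by
    norm_num
    linarith [log_seventeen_le_three]
  have hmain : (8 * π)⁻¹ * (log (1 + (1 / 16 : ℝ)⁻¹) - (1 + 1 / 16 : ℝ)⁻¹) ≤ 1 / 24 * 3 :=
    (mul_le_mul_of_nonneg_left hlog (by positivity)).trans
      (mul_le_mul_of_nonneg_right inv_eight_mul_pi_le (by norm_num))
  linarith [tsum_resolventWeight_le (by norm_num) hc, inv_two_mul_pi_sq_le]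

-- At `k = 0` both sides vanish because `(0 : ℝ)⁻¹ = 0`.
theorem resolventSummand_eq_resolventWeight (τ : ℝ) (k : ℤ × ℤ) :
    (if k ≠ 0 then ((1 + τ * (2 * π * kn2 k) ^ 4)⁻¹) ^ 2 * ((2 * π * kn2 k) ^ 2)⁻¹ else 0) =
      resolventWeight (16 * π ^ 4 * τ) ((k.1 : ℝ) ^ 2 + (k.2 : ℝ) ^ 2) := by
  have hk : kn2 k ^ 2 = (k.1 : ℝ) ^ 2 + (k.2 : ℝ) ^ 2 := sq_sqrt (by positivity)
  split_ifs with h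
  · rw [resolventWeight, ← hk]
    ring
  · simp [resolventWeight, not_not.1 h]

/-- explicit bounds for
`(Σ_{k≠0} (1+τ(2π|k|)⁴)⁻² (2π|k|)⁻²)^{1/2}`: at most
`(-(1/(8π)) ln τ + 0.52)^{1/2}` when `0 < τ ≤ (4π)⁻⁴`, and at most `0.8803`
when `τ > (4π)⁻⁴`. -/
theorem stmt19 (τ : ℝ) (hτ : 0 < τ) :
    (τ ≤ ((4 * π) ^ 4)⁻¹ →
      Real.sqrt (∑' k : ℤ × ℤ,
          if k ≠ 0 then
            ((1 + τ * (2 * π * kn2 k) ^ 4)⁻¹) ^ 2 * ((2 * π * kn2 k) ^ 2)⁻¹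
          else 0) ≤
        Real.sqrt (-(1 / (8 * π)) * Real.log τ + 0.52)) ∧
    (((4 * π) ^ 4)⁻¹ < τ →
      Real.sqrt (∑' k : ℤ × ℤ,
          if k ≠ 0 then
            ((1 + τ * (2 * π * kn2 k) ^ 4)⁻¹) ^ 2 * ((2 * π * kn2 k) ^ 2)⁻¹
          else 0) ≤ 0.8803) := by
  simp only [resolventSummand_eq_resolventWeight]
  exact ⟨fun h => sqrt_le_sqrt (tsum_resolventWeight_le_of_le hτ h), fun h =>
    (sqrt_le_sqrt (tsum_resolventWeight_le_of_lt h)).trans_eq (sqrt_sq (by norm_num))⟩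
end
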